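/- Let 0 -> V >< W -> ghat >< hhat -> g >< h -> 0 be an abelian extension of a matched pair of 3-Lie algebras (g,h,rho,psi) by (V,W), with induced representation (V,W,alpha,beta). Then the group Z1_MPL(g,h;V,W) of 1-cocycles is isomorphic, as a group, to the subgroup Aut^{g><h}_{V><W}(ghat >< hhat) of Aut_{V><W}(ghat >< hhat) consisting of automorphisms Y with Phi(Y) = (Id_{g><h}, Id_{V><W}); an isomorphism is given by sending Y = (gamma1,gamma2) to the pair of maps (zeta,eta) with zeta(x) = gamma1(s1(x)) - s1(x) and eta(a) = gamma2(s2(a)) - s2(a) for a section (s1,s2). -/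
import Mathlib


/-- A 3-Lie algebra over `k`: an alternating trilinear bracket satisfying the
fundamental (Jacobi/Filippov) identity. -/
structure ThreeLie (k : Type*) (g : Type*) [CommRing k] [AddCommGroup g] [Module k g] where
  br : g →ₗ[k] g →ₗ[k] g →ₗ[k] g
  alt₁ : ∀ x y, br x x y = 0
  alt₂ : ∀ x y, br x y y = 0
  fund : ∀ x1 x2 y1 y2 y3,
    br x1 x2 (br y1 y2 y3) =
      br (br x1 x2 y1) y2 y3 + br y1 (br x1 x2 y2) y3 + br y1 y2 (br x1 x2 y3)

/-- A representation of a 3-Lie algebra `(g, L)` on a module `V`. -/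
structure Rep3 (k : Type*) (g V : Type*) [CommRing k] [AddCommGroup g] [Module k g]
    [AddCommGroup V] [Module k V] (L : ThreeLie k g) where
  ρ : g →ₗ[k] g →ₗ[k] Module.End k V
  skew : ∀ x, ρ x x = 0
  rep1 : ∀ x1 x2 x3 x4 v, ρ x1 x2 (ρ x3 x4 v) =
    ρ x3 x4 (ρ x1 x2 v) + ρ (L.br x1 x2 x3) x4 v + ρ x3 (L.br x1 x2 x4) v
  rep2 : ∀ x1 x2 x3 x4 v, ρ (L.br x1 x2 x3) x4 v =
    ρ x1 x2 (ρ x3 x4 v) + ρ x2 x3 (ρ x1 x4 v) + ρ x3 x1 (ρ x2 x4 v)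

/-- A matched pair of 3-Lie algebras `(g, h, ρ, ψ)`. -/
structure MatchedPair (k : Type*) (g h : Type*) [CommRing k] [AddCommGroup g] [Module k g]
    [AddCommGroup h] [Module k h] where
  Lg : ThreeLie k g
  Lh : ThreeLie k h
  ρ : Rep3 k g h Lg
  ψ : Rep3 k h g Lh
  mp1 : ∀ a4 a5 x1 x2 x3, ψ.ρ a4 a5 (Lg.br x1 x2 x3) =
    Lg.br (ψ.ρ a4 a5 x1) x2 x3 + Lg.br x1 (ψ.ρ a4 a5 x2) x3 + Lg.br x1 x2 (ψ.ρ a4 a5 x3)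
  mp2 : ∀ x1 x2 x4 a3 a5, ψ.ρ (ρ.ρ x1 x2 a3) a5 x4 =
    ψ.ρ (ρ.ρ x1 x4 a5) a3 x2 - ψ.ρ (ρ.ρ x2 x4 a5) a3 x1 + Lg.br x1 x2 (ψ.ρ a3 a5 x4)
  mp3 : ∀ a2 a3 x1 x4 x5, Lg.br (ψ.ρ a2 a3 x1) x4 x5 =
    ψ.ρ a2 a3 (Lg.br x1 x4 x5) + ψ.ρ (ρ.ρ x4 x5 a2) a3 x1 + ψ.ρ a2 (ρ.ρ x4 x5 a3) x1
  mp4 : ∀ x4 x5 a1 a2 a3, ρ.ρ x4 x5 (Lh.br a1 a2 a3) =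
    Lh.br (ρ.ρ x4 x5 a1) a2 a3 + Lh.br a1 (ρ.ρ x4 x5 a2) a3 + Lh.br a1 a2 (ρ.ρ x4 x5 a3)
  mp5 : ∀ a1 a2 a4 x3 x5, ρ.ρ (ψ.ρ a1 a2 x3) x5 a4 =
    ρ.ρ (ψ.ρ a1 a4 x5) x3 a2 - ρ.ρ (ψ.ρ a2 a4 x5) x3 a1 + Lh.br a1 a2 (ρ.ρ x3 x5 a4)
  mp6 : ∀ x2 x3 a1 a4 a5, Lh.br (ρ.ρ x2 x3 a1) a4 a5 =
    ρ.ρ x2 x3 (Lh.br a1 a4 a5) + ρ.ρ (ψ.ρ a4 a5 x2) x3 a1 + ρ.ρ x2 (ψ.ρ a4 a5 x3) a1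

section MPRepSec

variable (k : Type*) (g h V W : Type*) [CommRing k]
  [AddCommGroup g] [Module k g] [AddCommGroup h] [Module k h]
  [AddCommGroup V] [Module k V] [AddCommGroup W] [Module k W]

/-- The raw data of a representation of a matched pair of 3-Lie algebras. -/
structure MPRepData where
  ρV : g →ₗ[k] g →ₗ[k] Module.End k V
  ψV : h →ₗ[k] h →ₗ[k] Module.End k V
  ρW : g →ₗ[k] g →ₗ[k] Module.End k W
  ψW : h →ₗ[k] h →ₗ[k] Module.End k W
  A : V →ₗ[k] g →ₗ[k] h →ₗ[k] W
  B : W →ₗ[k] h →ₗ[k] g →ₗ[k] V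

variable {k g h V W}

/-- A representation `(V, W, α, β)` of a matched pair of 3-Lie algebras
`(g, h, ρ, ψ)` (Definition 2.3 of arXiv:2508.14044). -/
structure MPRep (M : MatchedPair k g h) where
  rV : Rep3 k g V M.Lg
  pV : Rep3 k h V M.Lh
  rW : Rep3 k g W M.Lg
  pW : Rep3 k h W M.Lh
  A : V →ₗ[k] g →ₗ[k] h →ₗ[k] W
  B : W →ₗ[k] h →ₗ[k] g →ₗ[k] V
  iden1 : ∀ a1 a2 x2 x3 v1, pV.ρ a1 a2 (rV.ρ x2 x3 v1) =
    rV.ρ (M.ψ.ρ a1 a2 x2) x3 v1 + rV.ρ x2 (M.ψ.ρ a1 a2 x3) v1 + rV.ρ x2 x3 (pV.ρ a1 a2 v1)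
  iden2 : ∀ a1 a2 x1 x3 v2, pV.ρ a1 a2 (rV.ρ x1 x3 v2) =
    rV.ρ (M.ψ.ρ a1 a2 x1) x3 v2 + rV.ρ x1 (M.ψ.ρ a1 a2 x3) v2 + rV.ρ x1 x3 (pV.ρ a1 a2 v2)
  iden3 : ∀ a1 a2 x1 x2 v3, pV.ρ a1 a2 (rV.ρ x1 x2 v3) =
    rV.ρ (M.ψ.ρ a1 a2 x1) x2 v3 + rV.ρ x1 (M.ψ.ρ a1 a2 x2) v3 + rV.ρ x1 x2 (pV.ρ a1 a2 v3)
  iden4 : ∀ w1 w2 a1 a2 x1 x2 x3,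
    B w1 a2 (M.Lg.br x1 x2 x3) - B w2 a1 (M.Lg.br x1 x2 x3) =
      rV.ρ x2 x3 (B w1 a2 x1 - B w2 a1 x1) + rV.ρ x1 x3 (B w1 a2 x2 - B w2 a1 x2)
      + rV.ρ x1 x2 (B w1 a2 x3 - B w2 a1 x3)
  iden5 : ∀ x2 x3 a1 a2 v1, rV.ρ x2 (M.ψ.ρ a1 a2 x3) v1 = pV.ρ (M.ρ.ρ x2 x3 a2) a1 v1
  iden6 : ∀ x1 x3 a1 a2 v2, rV.ρ x1 (M.ψ.ρ a1 a2 x3) v2 = pV.ρ (M.ρ.ρ x1 x3 a2) a1 v2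
  iden7 : ∀ x1 x2 a1 a2 v3, rV.ρ x1 x2 (pV.ρ a1 a2 v3) = pV.ρ (M.ρ.ρ x1 x2 a1) a2 v3
  iden8 : ∀ x1 x2 x3 a1 a2 v1 v2 v3 w1 w2,
    rV.ρ x1 x2 (B w1 a2 x3 - B w2 a1 x3) =
      B (rW.ρ x2 x3 w2 + A v2 x3 a2 - A v3 x1 a2) a1 x1 - B w1 (M.ρ.ρ x2 x3 a2) x1
      - B (rW.ρ x1 x3 w2 + A v1 x3 a2 - A v3 x1 a2) a1 x2 + B w1 (M.ρ.ρ x1 x3 a2) x2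
      + B (rW.ρ x1 x2 w1 + A v1 x2 a1 - A v2 x1 a1) a2 x3 - B w2 (M.ρ.ρ x1 x2 a1) x3
  iden9 : ∀ x2 x3 a1 a2 v1, rV.ρ x2 x3 (pV.ρ a1 a2 v1) =
    pV.ρ a1 a2 (rV.ρ x2 x3 v1) + pV.ρ (M.ρ.ρ x2 x3 a1) a2 v1 + pV.ρ a1 (M.ρ.ρ x2 x3 a2) v1
  iden10 : ∀ x1 x2 x3 a1 a2 v2 v3 w1 w2,
    rV.ρ x2 x3 (B w1 a2 x1 - B w2 a1 x1) =
      (B w1 a2 (M.Lg.br x1 x2 x3) - B w2 a1 (M.Lg.br x1 x2 x3))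
      - B w2 (M.ρ.ρ x2 x3 a1) x1 + B w1 (M.ρ.ρ x2 x3 a2) x1
      + B (rW.ρ x2 x3 w1 + A v2 x3 a1 - A v3 x2 a1) a2 x1
      - B (rW.ρ x2 x2 w2 + A v2 x3 a2 - A v3 x2 a2) a1 x1
  iden11 : ∀ a1 a2 x1 x3 v2, rV.ρ (M.ψ.ρ a1 a2 x1) x3 v2 = pV.ρ a1 a2 (rV.ρ x1 x3 v2)
  iden12 : ∀ a1 a2 x1 x2 v3, rV.ρ (M.ψ.ρ a1 a2 x1) x2 v3 = pV.ρ a1 a2 (rV.ρ x1 x2 v3)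
  iden13 : ∀ x1 x2 a2 a3 w1, rW.ρ x1 x2 (pW.ρ a2 a3 w1) =
    pW.ρ (M.ρ.ρ x1 x2 a2) a3 w1 + pW.ρ a2 (M.ρ.ρ x1 x2 a3) w1 + pW.ρ a2 a3 (rW.ρ x1 x2 w1)
  iden14 : ∀ x1 x2 a1 a3 w2, rW.ρ x1 x2 (pW.ρ a1 a3 w2) =
    pW.ρ (M.ρ.ρ x1 x2 a1) a3 w2 + pW.ρ a1 (M.ρ.ρ x1 x2 a3) w2 + pW.ρ a1 a3 (rW.ρ x1 x2 w2)
  iden15 : ∀ x1 x2 a1 a2 w3, rW.ρ x1 x2 (pW.ρ a1 a2 w3) =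
    pW.ρ (M.ρ.ρ x1 x2 a1) a2 w3 + pW.ρ a1 (M.ρ.ρ x1 x2 a2) w3 + pW.ρ a1 a2 (rW.ρ x1 x2 w3)
  iden16 : ∀ v1 v2 x1 x2 a1 a2 a3,
    A v1 x2 (M.Lh.br a1 a2 a3) - A v2 x1 (M.Lh.br a1 a2 a3) =
      pW.ρ a2 a3 (A v1 x2 a1 - A v2 x1 a1) + pW.ρ a1 a3 (A v1 x1 a2 + A v2 x2 a2)
      + pW.ρ a1 a2 (A v1 x2 a3 - A v2 x1 a3)
  iden17 : ∀ a2 a3 x1 x2 w1, pW.ρ a2 (M.ρ.ρ x1 x2 a3) w1 = rW.ρ (M.ψ.ρ a2 a3 x2) x1 w1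
  iden18 : ∀ a1 a3 x1 x2 w2, pW.ρ a1 (M.ρ.ρ x1 x2 a3) w2 = rW.ρ (M.ψ.ρ a1 a3 x2) x1 w2
  iden19 : ∀ a1 a2 x1 x2 w3, pW.ρ a1 a2 (rW.ρ x1 x2 w3) = rW.ρ (M.ψ.ρ a1 a2 x1) x2 w3
  iden20 : ∀ a1 a2 a3 x1 x2 v1 v2 w1 w2 w3,
    pW.ρ a1 a2 (A v1 x2 a3 - A v2 x1 a3) =
      A (pV.ρ a2 a3 v2 + B w2 a3 x2 - B w3 a1 x2) x1 a1 - A v1 (M.ψ.ρ a2 a3 x2) a1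
      - A (pV.ρ a1 a3 v2 + B w1 a3 x2 - B w3 a1 x2) x1 a2 + A v1 (M.ψ.ρ a1 a3 x2) a2
      + A (pV.ρ a1 a2 v1 + B w1 a2 x1 - B w2 a1 x1) x2 a3 - A v2 (M.ψ.ρ a1 a2 x1) a3
  iden21 : ∀ a2 a3 x1 x2 w1, pW.ρ a2 a3 (rW.ρ x1 x2 w1) =
    rW.ρ x1 x2 (pW.ρ a2 a3 w1) + rW.ρ (M.ψ.ρ a2 a3 x1) x2 w1 + rW.ρ x1 (M.ψ.ρ a2 a3 x2) w1
  iden22 : ∀ a1 a2 a3 x1 x2 v1 v2 w2 w3,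
    pW.ρ a2 a3 (A v1 x2 a1 - A v2 x1 a1) =
      (A v1 x2 (M.Lh.br a1 a2 a3) - A v2 x1 (M.Lh.br a1 a2 a3))
      - A v2 (M.ψ.ρ a2 a3 x1) a1 + A v1 (M.ψ.ρ a2 a3 x2) a1
      + A (pV.ρ a2 a3 v1 + B w2 a3 x1 - B w3 a2 x1) x2 a1
      - A (pV.ρ a2 a2 v2 + B w2 a3 x2 - B w3 a2 x2) x1 a1
  iden23 : ∀ x1 x2 a1 a3 w2, pW.ρ (M.ρ.ρ x1 x2 a1) a3 w2 = rW.ρ x1 x2 (pW.ρ a1 a3 w2)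
  iden24 : ∀ x1 x2 a1 a2 w3, pW.ρ (M.ρ.ρ x1 x2 a1) a2 w3 = rW.ρ x1 x2 (pW.ρ a1 a2 w3)

/-- Forget the axioms of a matched-pair representation. -/
def MPRep.toData {M : MatchedPair k g h} (R : MPRep (V := V) (W := W) M) :
    MPRepData k g h V W :=
  ⟨R.rV.ρ, R.pV.ρ, R.rW.ρ, R.pW.ρ, R.A, R.B⟩

end MPRepSec

/-- The adjoint representation data of a matched pair on itself. -/
def adjData {k g h : Type*} [CommRing k] [AddCommGroup g] [Module k g]
    [AddCommGroup h] [Module k h] (M : MatchedPair k g h) : MPRepData k g h g h :=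
  ⟨M.Lg.br, M.ψ.ρ, M.ρ.ρ, M.Lh.br, M.ρ.ρ, M.ψ.ρ⟩
section CochainSec

variable (k : Type*) (g h V W : Type*) [CommRing k]
  [AddCommGroup g] [Module k g] [AddCommGroup h] [Module k h]
  [AddCommGroup V] [Module k V] [AddCommGroup W] [Module k W]

/-- A 2-cochain `(ω, θ, ν, φ)` of a matched pair of 3-Lie algebras with
coefficients in a pair of modules `(V, W)`. -/
structure Cochain2 where
  ω : g →ₗ[k] g →ₗ[k] g →ₗ[k] V
  θ : h →ₗ[k] h →ₗ[k] h →ₗ[k] W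
  ν : g →ₗ[k] g →ₗ[k] h →ₗ[k] W
  φ : h →ₗ[k] h →ₗ[k] g →ₗ[k] V
  ω_alt₁ : ∀ x y, ω x x y = 0
  ω_alt₂ : ∀ x y, ω x y y = 0
  θ_alt₁ : ∀ a b, θ a a b = 0
  θ_alt₂ : ∀ a b, θ a b b = 0
  ν_skew : ∀ x, ν x x = 0
  φ_skew : ∀ a, φ a a = 0

variable {k g h V W}

instance : Sub (Cochain2 k g h V W) :=
  ⟨fun c d =>
    { ω := c.ω - d.ω
      θ := c.θ - d.θ
      ν := c.ν - d.ν
      φ := c.φ - d.φ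
      ω_alt₁ := by intro x y; simp [c.ω_alt₁, d.ω_alt₁]
      ω_alt₂ := by intro x y; simp [c.ω_alt₂, d.ω_alt₂]
      θ_alt₁ := by intro a b; simp [c.θ_alt₁, d.θ_alt₁]
      θ_alt₂ := by intro a b; simp [c.θ_alt₂, d.θ_alt₂]
      ν_skew := by intro x; simp [c.ν_skew, d.ν_skew]
      φ_skew := by intro a; simp [c.φ_skew, d.φ_skew] }⟩

/-- The eight 2-cocycle identities (2co-1)–(2co-8) of arXiv:2508.14044, with
coefficients in a representation (data) `R` of the matched pair `M`. -/
def IsCocycle2 (M : MatchedPair k g h) (R : MPRepData k g h V W)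
    (c : Cochain2 k g h V W) : Prop :=
  (∀ x1 x2 x3 x4 x5 : g,
    R.ρV x4 x5 (c.ω x1 x2 x3) + R.ρV x5 x3 (c.ω x1 x2 x4) + R.ρV x3 x4 (c.ω x1 x2 x5)
    + c.ω (M.Lg.br x1 x2 x3) x4 x5 + c.ω x3 (M.Lg.br x1 x2 x4) x5
    + c.ω x3 x4 (M.Lg.br x1 x2 x5)
    - R.ρV x1 x2 (c.ω x3 x4 x5) - c.ω x1 x2 (M.Lg.br x3 x4 x5) = 0) ∧
  (∀ (x1 x2 : g) (a1 a2 a3 : h),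
    R.ψW a2 a3 (c.ν x1 x2 a1) + R.ψW a3 a1 (c.ν x1 x2 a2) + R.ψW a1 a2 (c.ν x1 x2 a3)
    + c.θ (M.ρ.ρ x1 x2 a1) a2 a3 + c.θ a1 (M.ρ.ρ x1 x2 a2) a3 + c.θ a1 a2 (M.ρ.ρ x1 x2 a3)
    - R.ρW x1 x2 (c.θ a1 a2 a3) - c.ν x1 x2 (M.Lh.br a1 a2 a3) = 0) ∧
  (∀ (a1 a2 : h) (x1 x2 x3 : g),
    R.ρV x2 x3 (c.φ a1 a2 x1) + R.ρV x3 x1 (c.φ a1 a2 x2) + R.ρV x1 x2 (c.φ a1 a2 x3)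
    + c.ω (M.ψ.ρ a1 a2 x1) x2 x3 + c.ω x1 (M.ψ.ρ a1 a2 x2) x3 + c.ω x1 x2 (M.ψ.ρ a1 a2 x3)
    - R.ψV a1 a2 (c.ω x1 x2 x3) - c.φ a1 a2 (M.Lg.br x1 x2 x3) = 0) ∧
  (∀ (x1 x2 x3 : g) (a1 a2 : h),
    R.B (c.ν x1 x3 a2) a1 x2 + c.φ (M.ρ.ρ x1 x3 a2) a1 x2
    - R.B (c.ν x2 x3 a2) a1 x1 - c.φ (M.ρ.ρ x2 x3 a2) a1 x1
    + R.ρV x1 x2 (c.φ a1 a2 x3) + c.ω x1 x2 (M.ψ.ρ a1 a2 x3)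
    - R.B (c.ν x1 x2 a1) a2 x3 - c.φ (M.ρ.ρ x1 x2 a1) a2 x3 = 0) ∧
  (∀ (a1 a2 a3 : h) (x1 x2 : g),
    R.A (c.φ a1 a3 x2) x1 a2 + c.ν (M.ψ.ρ a1 a3 x2) x1 a2
    - R.A (c.φ a2 a3 x2) x1 a1 - c.ν (M.ψ.ρ a2 a3 x2) x1 a1
    + R.ψW a1 a2 (c.ν x1 x2 a3) + c.θ a1 a2 (M.ρ.ρ x1 x2 a3)
    - R.A (c.φ a1 a2 x1) x2 a3 - c.ν (M.ψ.ρ a1 a2 x1) x2 a3 = 0) ∧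
  (∀ (a1 a2 : h) (x1 x2 x3 : g),
    R.ψV a1 a2 (c.ω x1 x2 x3) + c.φ a1 a2 (M.Lg.br x1 x2 x3)
    + c.φ (M.ρ.ρ x2 x3 a1) a2 x1 + R.B (c.ν x2 x3 a1) a2 x1
    + c.φ a1 (M.ρ.ρ x2 x3 a2) x1 - R.B (c.ν x2 x3 a2) a1 x1
    - c.ω (M.ψ.ρ a1 a2 x1) x2 x3 - R.ρV x2 x3 (c.φ a1 a2 x1) = 0) ∧
  (∀ (x1 x2 : g) (a1 a2 a3 : h),
    R.ρW x1 x2 (c.θ a1 a2 a3) + c.ν x1 x2 (M.Lh.br a1 a2 a3)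
    + c.ν (M.ψ.ρ a2 a3 x1) x2 a1 + R.A (c.φ a2 a3 x1) x2 a1
    + c.ν x1 (M.ψ.ρ a2 a3 x2) a1 - R.A (c.φ a2 a3 x2) x1 a1
    - c.θ (M.ρ.ρ x1 x2 a1) a2 a3 - R.ψW a2 a3 (c.ν x1 x2 a1) = 0) ∧
  (∀ a1 a2 a3 a4 a5 : h,
    R.ψW a4 a5 (c.θ a1 a2 a3) + R.ψW a5 a3 (c.θ a1 a2 a4) + R.ψW a3 a4 (c.θ a1 a2 a5)
    + c.θ (M.Lh.br a1 a2 a3) a4 a5 + c.θ a3 (M.Lh.br a1 a2 a4) a5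
    + c.θ a3 a4 (M.Lh.br a1 a2 a5)
    - R.ψW a1 a2 (c.θ a3 a4 a5) - c.θ a1 a2 (M.Lh.br a3 a4 a5) = 0)

/-- `c` is the image under the differential `D₁` of the 1-cochain `(N1, N2)`. -/
def IsD1 (M : MatchedPair k g h) (R : MPRepData k g h V W)
    (N1 : g →ₗ[k] V) (N2 : h →ₗ[k] W) (c : Cochain2 k g h V W) : Prop :=
  (∀ x1 x2 x3, c.ω x1 x2 x3 =
    R.ρV x2 x3 (N1 x1) + R.ρV x3 x1 (N1 x2) + R.ρV x1 x2 (N1 x3) - N1 (M.Lg.br x1 x2 x3)) ∧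
  (∀ x1 x2 a, c.ν x1 x2 a =
    R.ρW x1 x2 (N2 a) - N2 (M.ρ.ρ x1 x2 a) + R.A (N1 x1) x2 a - R.A (N1 x2) x1 a) ∧
  (∀ a1 a2 x, c.φ a1 a2 x =
    R.ψV a1 a2 (N1 x) - N1 (M.ψ.ρ a1 a2 x) + R.B (N2 a1) a2 x - R.B (N2 a2) a1 x) ∧
  (∀ a1 a2 a3, c.θ a1 a2 a3 =
    R.ψW a2 a3 (N2 a1) + R.ψW a3 a1 (N2 a2) + R.ψW a1 a2 (N2 a3) - N2 (M.Lh.br a1 a2 a3))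

/-- `c` is a 2-coboundary. -/
def IsCoboundary (M : MatchedPair k g h) (R : MPRepData k g h V W)
    (c : Cochain2 k g h V W) : Prop :=
  ∃ (N1 : g →ₗ[k] V) (N2 : h →ₗ[k] W), IsD1 M R N1 N2 c

/-- Two 2-cochains are cohomologous if their difference is a 2-coboundary. -/
def Cohomologous (M : MatchedPair k g h) (R : MPRepData k g h V W)
    (c c' : Cochain2 k g h V W) : Prop :=
  IsCoboundary M R (c - c')

/-- The 1-cocycle conditions `D₁(ζ, η) = 0`. -/
def IsCocycle1 (M : MatchedPair k g h) (R : MPRepData k g h V W)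
    (ζ : g →ₗ[k] V) (η : h →ₗ[k] W) : Prop :=
  (∀ x1 x2 x3,
    R.ρV x2 x3 (ζ x1) + R.ρV x3 x1 (ζ x2) + R.ρV x1 x2 (ζ x3) = ζ (M.Lg.br x1 x2 x3)) ∧
  (∀ x1 x2 a,
    R.ρW x1 x2 (η a) - η (M.ρ.ρ x1 x2 a) + R.A (ζ x1) x2 a - R.A (ζ x2) x1 a = 0) ∧
  (∀ a1 a2 x,
    R.ψV a1 a2 (ζ x) - ζ (M.ψ.ρ a1 a2 x) + R.B (η a1) a2 x - R.B (η a2) a1 x = 0) ∧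
  (∀ a1 a2 a3,
    R.ψW a2 a3 (η a1) + R.ψW a3 a1 (η a2) + R.ψW a1 a2 (η a3) = η (M.Lh.br a1 a2 a3))

/-- The second cohomology group of a matched pair of 3-Lie algebras (as a quotient
of 2-cocycles by the relation of being cohomologous). -/
def H2MPL (M : MatchedPair k g h) (R : MPRepData k g h V W) :=
  Quot (fun c c' : {c : Cochain2 k g h V W // IsCocycle2 M R c} =>
    Cohomologous M R c.1 c'.1)

end CochainSec

section DualSec

variable {k : Type*} [CommRing k] {g : Type*} [AddCommGroup g] [Module k g]

/-- The `k[t]/(t²)`-module structure on `g[t]/(t²) = g × g`, where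
`(a + b t) • (x₀ + x₁ t) = a • x₀ + (a • x₁ + b • x₀) t`. -/
instance dualNumberModule : Module (DualNumber k) (g × g) where
  smul r x := (r.fst • x.1, r.fst • x.2 + r.snd • x.1)
  one_smul x := by
    show ((1 : DualNumber k).fst • x.1, (1 : DualNumber k).fst • x.2
      + (1 : DualNumber k).snd • x.1) = x
    simp
  mul_smul r s x := by
    show ((r * s).fst • x.1, (r * s).fst • x.2 + (r * s).snd • x.1)
      = (r.fst • (s.fst • x.1),
         r.fst • (s.fst • x.2 + s.snd • x.1) + r.snd • (s.fst • x.1))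
    ext
    · simp [TrivSqZeroExt.fst_mul, mul_smul]
    · simp only [TrivSqZeroExt.snd_mul, smul_eq_mul, MulOpposite.smul_eq_mul_unop,
        MulOpposite.unop_op, add_smul, mul_smul, TrivSqZeroExt.fst_mul, smul_add]
      abel
  smul_zero r := by
    show ((r : DualNumber k).fst • (0 : g), r.fst • (0 : g) + r.snd • (0 : g)) = 0
    simp
  smul_add r x y := by
    show (r.fst • (x.1 + y.1), r.fst • (x.2 + y.2) + r.snd • (x.1 + y.1))
      = ((r.fst • x.1, r.fst • x.2 + r.snd • x.1)
        + (r.fst • y.1, r.fst • y.2 + r.snd • y.1))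
    ext <;> (simp [smul_add]; try abel)
  add_smul r s x := by
    show ((r + s).fst • x.1, (r + s).fst • x.2 + (r + s).snd • x.1)
      = ((r.fst • x.1, r.fst • x.2 + r.snd • x.1)
        + (s.fst • x.1, s.fst • x.2 + s.snd • x.1))
    ext <;> (simp [add_smul]; try abel)
  zero_smul x := by
    show ((0 : DualNumber k).fst • x.1, (0 : DualNumber k).fst • x.2
      + (0 : DualNumber k).snd • x.1) = 0
    simp

end DualSec

section DeformSec

variable {k g h : Type*} [CommRing k] [AddCommGroup g] [Module k g]
  [AddCommGroup h] [Module k h]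

/-- The `t`-linear extension of the deformed bracket `[·,·,·] + t ω` on `g[t]/(t²)`. -/
def defBrG (M : MatchedPair k g h) (c : Cochain2 k g h g h) :
    g × g → g × g → g × g → g × g := fun X Y Z =>
  (M.Lg.br X.1 Y.1 Z.1,
   c.ω X.1 Y.1 Z.1 + M.Lg.br X.2 Y.1 Z.1 + M.Lg.br X.1 Y.2 Z.1 + M.Lg.br X.1 Y.1 Z.2)

/-- The `t`-linear extension of the deformed bracket `[·,·,·] + t θ` on `h[t]/(t²)`. -/
def defBrH (M : MatchedPair k g h) (c : Cochain2 k g h g h) :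
    h × h → h × h → h × h → h × h := fun A B C =>
  (M.Lh.br A.1 B.1 C.1,
   c.θ A.1 B.1 C.1 + M.Lh.br A.2 B.1 C.1 + M.Lh.br A.1 B.2 C.1 + M.Lh.br A.1 B.1 C.2)

/-- The `t`-linear extension of the deformed action `ρ + t ν`. -/
def defRho (M : MatchedPair k g h) (c : Cochain2 k g h g h) :
    g × g → g × g → h × h → h × h := fun X Y A =>
  (M.ρ.ρ X.1 Y.1 A.1,
   c.ν X.1 Y.1 A.1 + M.ρ.ρ X.2 Y.1 A.1 + M.ρ.ρ X.1 Y.2 A.1 + M.ρ.ρ X.1 Y.1 A.2)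

/-- The `t`-linear extension of the deformed action `ψ + t φ`. -/
def defPsi (M : MatchedPair k g h) (c : Cochain2 k g h g h) :
    h × h → h × h → g × g → g × g := fun A B X =>
  (M.ψ.ρ A.1 B.1 X.1,
   c.φ A.1 B.1 X.1 + M.ψ.ρ A.2 B.1 X.1 + M.ψ.ρ A.1 B.2 X.1 + M.ψ.ρ A.1 B.1 X.2)

/-- `(ω, θ, ν, φ)` is an infinitesimal deformation of the matched pair `M`: the
`t`-linear extensions of the deformed structure maps make
`(g[t]/(t²), h[t]/(t²))` into a matched pair of 3-Lie algebras over `k[t]/(t²)`. -/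
def IsInfDeformation (M : MatchedPair k g h) (c : Cochain2 k g h g h) : Prop :=
  ∃ Mt : MatchedPair (DualNumber k) (g × g) (h × h),
    (∀ X Y Z, Mt.Lg.br X Y Z = defBrG M c X Y Z) ∧
    (∀ A B C, Mt.Lh.br A B C = defBrH M c A B C) ∧
    (∀ X Y A, Mt.ρ.ρ X Y A = defRho M c X Y A) ∧
    (∀ A B X, Mt.ψ.ρ A B X = defPsi M c A B X)

/-- The map `id + t f` on `g[t]/(t²)`. -/
def tMap (f : g →ₗ[k] g) : g × g → g × g := fun p => (p.1, p.2 + f p.1)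

/-- The pair `(id_g + t f, id_h + t g')` is a morphism of matched pairs over
`k[t]/(t²)` from the deformation `c` to the deformation `c'`. -/
def IsDeformMorphism (M : MatchedPair k g h) (c c' : Cochain2 k g h g h)
    (f : g →ₗ[k] g) (g' : h →ₗ[k] h) : Prop :=
  (∀ X Y Z, tMap f (defBrG M c X Y Z) = defBrG M c' (tMap f X) (tMap f Y) (tMap f Z)) ∧
  (∀ A B C, tMap g' (defBrH M c A B C) = defBrH M c' (tMap g' A) (tMap g' B) (tMap g' C)) ∧
  (∀ X Y A, tMap g' (defRho M c X Y A) = defRho M c' (tMap f X) (tMap f Y) (tMap g' A)) ∧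
  (∀ A B X, tMap f (defPsi M c A B X) = defPsi M c' (tMap g' A) (tMap g' B) (tMap f X))

/-- Equivalence of infinitesimal deformations. -/
def DeformEquiv (M : MatchedPair k g h) (c c' : Cochain2 k g h g h) : Prop :=
  ∃ (f : g →ₗ[k] g) (g' : h →ₗ[k] h), IsDeformMorphism M c c' f g'

end DeformSec

section ExtSec

variable (k : Type*) (g h V W ghat hhat : Type*) [CommRing k]
  [AddCommGroup g] [Module k g] [AddCommGroup h] [Module k h]
  [AddCommGroup V] [Module k V] [AddCommGroup W] [Module k W]
  [AddCommGroup ghat] [Module k ghat] [AddCommGroup hhat] [Module k hhat]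

/-- An abelian extension `0 → V ⋈ W → ĝ ⋈ ĥ → g ⋈ h → 0` of a matched pair of
3-Lie algebras `M` by the pair of modules `(V, W)` (with trivial structure). -/
structure AbelianExt (M : MatchedPair k g h) where
  Mhat : MatchedPair k ghat hhat
  i1 : V →ₗ[k] ghat
  i2 : W →ₗ[k] hhat
  j1 : ghat →ₗ[k] g
  j2 : hhat →ₗ[k] h
  i1_br : ∀ v1 v2 v3, Mhat.Lg.br (i1 v1) (i1 v2) (i1 v3) = 0
  i2_br : ∀ w1 w2 w3, Mhat.Lh.br (i2 w1) (i2 w2) (i2 w3) = 0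
  i_rho : ∀ v1 v2 w, Mhat.ρ.ρ (i1 v1) (i1 v2) (i2 w) = 0
  i_psi : ∀ w1 w2 v, Mhat.ψ.ρ (i2 w1) (i2 w2) (i1 v) = 0
  j1_br : ∀ X Y Z, j1 (Mhat.Lg.br X Y Z) = M.Lg.br (j1 X) (j1 Y) (j1 Z)
  j2_br : ∀ A B C, j2 (Mhat.Lh.br A B C) = M.Lh.br (j2 A) (j2 B) (j2 C)
  j_rho : ∀ X Y A, j2 (Mhat.ρ.ρ X Y A) = M.ρ.ρ (j1 X) (j1 Y) (j2 A)
  j_psi : ∀ A B X, j1 (Mhat.ψ.ρ A B X) = M.ψ.ρ (j2 A) (j2 B) (j1 X)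
  i1_inj : Function.Injective i1
  i2_inj : Function.Injective i2
  j1_surj : Function.Surjective j1
  j2_surj : Function.Surjective j2
  exact1 : ∀ X, j1 X = 0 ↔ ∃ v, i1 v = X
  exact2 : ∀ A, j2 A = 0 ↔ ∃ w, i2 w = A

variable {k g h V W ghat hhat}
variable {M : MatchedPair k g h}

/-- `(s1, s2)` is a section of `(j1, j2)`. -/
def IsSection (E : AbelianExt k g h V W ghat hhat M)
    (s1 : g →ₗ[k] ghat) (s2 : h →ₗ[k] hhat) : Prop :=
  (∀ x, E.j1 (s1 x) = x) ∧ (∀ a, E.j2 (s2 a) = a)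

/-- The representation data `R` on `(V, W)` is the one induced on the abelian
extension `E` (via any section, transported along the injections `i1, i2`). -/
def IsInducedRep (E : AbelianExt k g h V W ghat hhat M)
    (R : MPRepData k g h V W) : Prop :=
  ∀ s1 s2, IsSection E s1 s2 →
    (∀ x1 x2 v, E.i1 (R.ρV x1 x2 v) = E.Mhat.Lg.br (s1 x1) (s1 x2) (E.i1 v)) ∧
    (∀ x1 x2 w, E.i2 (R.ρW x1 x2 w) = E.Mhat.ρ.ρ (s1 x1) (s1 x2) (E.i2 w)) ∧
    (∀ a1 a2 v, E.i1 (R.ψV a1 a2 v) = E.Mhat.ψ.ρ (s2 a1) (s2 a2) (E.i1 v)) ∧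
    (∀ a1 a2 w, E.i2 (R.ψW a1 a2 w) = E.Mhat.Lh.br (s2 a1) (s2 a2) (E.i2 w)) ∧
    (∀ v x a, E.i2 (R.A v x a) = E.Mhat.ρ.ρ (E.i1 v) (s1 x) (s2 a)) ∧
    (∀ w a x, E.i1 (R.B w a x) = E.Mhat.ψ.ρ (E.i2 w) (s2 a) (s1 x))

/-- `c` is the 2-cocycle associated to the abelian extension `E` and the
section `(s1, s2)`. -/
def IsExtCocycle (E : AbelianExt k g h V W ghat hhat M)
    (s1 : g →ₗ[k] ghat) (s2 : h →ₗ[k] hhat) (c : Cochain2 k g h V W) : Prop :=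
  (∀ x1 x2 x3, E.i1 (c.ω x1 x2 x3) =
    E.Mhat.Lg.br (s1 x1) (s1 x2) (s1 x3) - s1 (M.Lg.br x1 x2 x3)) ∧
  (∀ a1 a2 a3, E.i2 (c.θ a1 a2 a3) =
    E.Mhat.Lh.br (s2 a1) (s2 a2) (s2 a3) - s2 (M.Lh.br a1 a2 a3)) ∧
  (∀ x1 x2 a, E.i2 (c.ν x1 x2 a) =
    E.Mhat.ρ.ρ (s1 x1) (s1 x2) (s2 a) - s2 (M.ρ.ρ x1 x2 a)) ∧
  (∀ a1 a2 x, E.i1 (c.φ a1 a2 x) =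
    E.Mhat.ψ.ρ (s2 a1) (s2 a2) (s1 x) - s1 (M.ψ.ρ a1 a2 x))

end ExtSec

section ExtIsoSec

variable {k g h V W ghat hhat ghat' hhat' : Type*} [CommRing k]
  [AddCommGroup g] [Module k g] [AddCommGroup h] [Module k h]
  [AddCommGroup V] [Module k V] [AddCommGroup W] [Module k W]
  [AddCommGroup ghat] [Module k ghat] [AddCommGroup hhat] [Module k hhat]
  [AddCommGroup ghat'] [Module k ghat'] [AddCommGroup hhat'] [Module k hhat']
  {M : MatchedPair k g h}

/-- `(f, gm)` is an isomorphism of abelian extensions from `E` to `E'`. -/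
def IsExtIso (E : AbelianExt k g h V W ghat hhat M)
    (E' : AbelianExt k g h V W ghat' hhat' M)
    (f : ghat →ₗ[k] ghat') (gm : hhat →ₗ[k] hhat') : Prop :=
  Function.Bijective f ∧ Function.Bijective gm ∧
  (∀ X Y Z, f (E.Mhat.Lg.br X Y Z) = E'.Mhat.Lg.br (f X) (f Y) (f Z)) ∧
  (∀ A B C, gm (E.Mhat.Lh.br A B C) = E'.Mhat.Lh.br (gm A) (gm B) (gm C)) ∧
  (∀ X Y A, gm (E.Mhat.ρ.ρ X Y A) = E'.Mhat.ρ.ρ (f X) (f Y) (gm A)) ∧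
  (∀ A B X, f (E.Mhat.ψ.ρ A B X) = E'.Mhat.ψ.ρ (gm A) (gm B) (f X)) ∧
  (∀ v, f (E.i1 v) = E'.i1 v) ∧ (∀ w, gm (E.i2 w) = E'.i2 w) ∧
  (∀ X, E'.j1 (f X) = E.j1 X) ∧ (∀ A, E'.j2 (gm A) = E.j2 A)

end ExtIsoSec

section AutSec

variable {k g h V W ghat hhat : Type*} [CommRing k]
  [AddCommGroup g] [Module k g] [AddCommGroup h] [Module k h]
  [AddCommGroup V] [Module k V] [AddCommGroup W] [Module k W]
  [AddCommGroup ghat] [Module k ghat] [AddCommGroup hhat] [Module k hhat]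

/-- `(f, gm)` is an automorphism of the matched pair `M` (as a pair of linear
equivalences preserving the brackets and actions). -/
def IsMPAut (M : MatchedPair k g h) (f : g ≃ₗ[k] g) (gm : h ≃ₗ[k] h) : Prop :=
  (∀ x y z, f (M.Lg.br x y z) = M.Lg.br (f x) (f y) (f z)) ∧
  (∀ a b c, gm (M.Lh.br a b c) = M.Lh.br (gm a) (gm b) (gm c)) ∧
  (∀ x y a, gm (M.ρ.ρ x y a) = M.ρ.ρ (f x) (f y) (gm a)) ∧
  (∀ a b x, f (M.ψ.ρ a b x) = M.ψ.ρ (gm a) (gm b) (f x))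

/-- A pair of (not necessarily invertible a priori) linear maps is an
automorphism of the matched pair `M`. -/
def IsMPAutMap (M : MatchedPair k g h) (f : g →ₗ[k] g) (gm : h →ₗ[k] h) : Prop :=
  Function.Bijective f ∧ Function.Bijective gm ∧
  (∀ x y z, f (M.Lg.br x y z) = M.Lg.br (f x) (f y) (f z)) ∧
  (∀ a b c, gm (M.Lh.br a b c) = M.Lh.br (gm a) (gm b) (gm c)) ∧
  (∀ x y a, gm (M.ρ.ρ x y a) = M.ρ.ρ (f x) (f y) (gm a)) ∧
  (∀ a b x, f (M.ψ.ρ a b x) = M.ψ.ρ (gm a) (gm b) (f x))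

variable {M : MatchedPair k g h}

/-- The pair `(α, β) = ((α1, α2), (β1, β2))` is inducible: it is the image under
`Φ` of an automorphism `(γ1, γ2)` of the extension preserving `(V, W)`. -/
def Inducible (E : AbelianExt k g h V W ghat hhat M)
    (s1 : g →ₗ[k] ghat) (s2 : h →ₗ[k] hhat)
    (α1 : g ≃ₗ[k] g) (α2 : h ≃ₗ[k] h) (β1 : V ≃ₗ[k] V) (β2 : W ≃ₗ[k] W) : Prop :=
  ∃ (γ1 : ghat ≃ₗ[k] ghat) (γ2 : hhat ≃ₗ[k] hhat),
    IsMPAut E.Mhat γ1 γ2 ∧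
    (∀ v, γ1 (E.i1 v) = E.i1 (β1 v)) ∧ (∀ w, γ2 (E.i2 w) = E.i2 (β2 w)) ∧
    (∀ x, E.j1 (γ1 (s1 x)) = α1 x) ∧ (∀ a, E.j2 (γ2 (s2 a)) = α2 a)

/-- The conditions (Iam1)–(Iam4) of Theorem 5.2 of arXiv:2508.14044 on the pair
of linear maps `(ζ, η)`. -/
def IamCond (M : MatchedPair k g h) (R : MPRepData k g h V W)
    (c : Cochain2 k g h V W)
    (α1 : g ≃ₗ[k] g) (α2 : h ≃ₗ[k] h) (β1 : V ≃ₗ[k] V) (β2 : W ≃ₗ[k] W)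
    (ζ : g →ₗ[k] V) (η : h →ₗ[k] W) : Prop :=
  (∀ x1 x2 x3, β1 (c.ω x1 x2 x3) - c.ω (α1 x1) (α1 x2) (α1 x3) =
      R.ρV (α1 x2) (α1 x3) (ζ x1) + R.ρV (α1 x3) (α1 x1) (ζ x2)
      + R.ρV (α1 x1) (α1 x2) (ζ x3) - ζ (M.Lg.br x1 x2 x3)) ∧
  (∀ a1 a2 a3, β2 (c.θ a1 a2 a3) - c.θ (α2 a1) (α2 a2) (α2 a3) =
      R.ψW (α2 a2) (α2 a3) (η a1) + R.ψW (α2 a3) (α2 a1) (η a2)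
      + R.ψW (α2 a1) (α2 a2) (η a3) - η (M.Lh.br a1 a2 a3)) ∧
  (∀ x1 x2 a, β2 (c.ν x1 x2 a) - c.ν (α1 x1) (α1 x2) (α2 a) =
      R.ρW (α1 x1) (α1 x2) (η a) - η (M.ρ.ρ x1 x2 a)
      + R.A (ζ x1) (α1 x2) (α2 a) - R.A (ζ x2) (α1 x1) (α2 a)) ∧
  (∀ a1 a2 x, β1 (c.φ a1 a2 x) - c.φ (α2 a1) (α2 a2) (α1 x) =
      R.ψV (α2 a1) (α2 a2) (ζ x) - ζ (M.ψ.ρ a1 a2 x)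
      + R.B (η a1) (α2 a2) (α1 x) - R.B (η a2) (α2 a1) (α1 x))

/-- The subgroup `C` of compatible pairs of automorphisms. -/
def InC (M : MatchedPair k g h) (R : MPRepData k g h V W) (c : Cochain2 k g h V W)
    (α1 : g ≃ₗ[k] g) (α2 : h ≃ₗ[k] h) (β1 : V ≃ₗ[k] V) (β2 : W ≃ₗ[k] W) : Prop :=
  ∃ (ζ : g →ₗ[k] V) (η : h →ₗ[k] W), IamCond M R c α1 α2 β1 β2 ζ η

/-- `c'` is the transform `(ω, θ, ν, φ)_{(α,β)}` of the 2-cochain `c` under the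
pair of automorphisms `(α, β)`. -/
def IsTransformed (c : Cochain2 k g h V W)
    (α1 : g ≃ₗ[k] g) (α2 : h ≃ₗ[k] h) (β1 : V ≃ₗ[k] V) (β2 : W ≃ₗ[k] W)
    (c' : Cochain2 k g h V W) : Prop :=
  (∀ x1 x2 x3, c'.ω x1 x2 x3 = β1 (c.ω (α1.symm x1) (α1.symm x2) (α1.symm x3))) ∧
  (∀ a1 a2 a3, c'.θ a1 a2 a3 = β2 (c.θ (α2.symm a1) (α2.symm a2) (α2.symm a3))) ∧
  (∀ x1 x2 a, c'.ν x1 x2 a = β2 (c.ν (α1.symm x1) (α1.symm x2) (α2.symm a))) ∧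
  (∀ a1 a2 x, c'.φ a1 a2 x = β1 (c.φ (α2.symm a1) (α2.symm a2) (α1.symm x)))

end AutSec

/-- The class of a 2-cocycle in the second cohomology group. -/
def H2MPL.mk {k g h V W : Type*} [CommRing k]
    [AddCommGroup g] [Module k g] [AddCommGroup h] [Module k h]
    [AddCommGroup V] [Module k V] [AddCommGroup W] [Module k W]
    (M : MatchedPair k g h) (R : MPRepData k g h V W)
    (c : {c : Cochain2 k g h V W // IsCocycle2 M R c}) : H2MPL M R :=
  Quot.mk _ c

section Helpers

variable {k : Type*} [CommRing k] {g V : Type*} [AddCommGroup g] [Module k g]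
  [AddCommGroup V] [Module k V]

theorem ThreeLie.swap12 (L : ThreeLie k g) (a b c : g) : L.br a b c = - L.br b a c := by
  have h := L.alt₁ (a + b) c
  simp only [map_add, LinearMap.add_apply, L.alt₁] at h
  rw [eq_neg_iff_add_eq_zero]
  abel_nf at h ⊢
  exact h

theorem ThreeLie.swap23 (L : ThreeLie k g) (a b c : g) : L.br a b c = - L.br a c b := by
  have h := L.alt₂ a (b + c)
  simp only [map_add, LinearMap.add_apply, L.alt₂] at h
  rw [eq_neg_iff_add_eq_zero]
  abel_nf at h ⊢
  exact h

theorem ThreeLie.cyc (L : ThreeLie k g) (a b c : g) : L.br a b c = L.br b c a := by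
  rw [L.swap12 a b c, L.swap23 b a c, neg_neg]

theorem Rep3.swap {L : ThreeLie k g} (R3 : Rep3 k g V L) (x y : g) (v : V) :
    R3.ρ x y v = - R3.ρ y x v := by
  have h := R3.skew (x + y)
  have h2 := congrArg (fun (T : Module.End k V) => T v) h
  simp only [map_add, LinearMap.add_apply, LinearMap.zero_apply] at h2
  have h3 := R3.skew x
  have h4 := R3.skew y
  rw [eq_neg_iff_add_eq_zero]
  have h5 : R3.ρ x x v = 0 := by rw [h3]; rfl
  have h6 : R3.ρ y y v = 0 := by rw [h4]; rfl
  rw [h5, h6] at h2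
  abel_nf at h2 ⊢
  exact h2

theorem exists_linmap_of_not_mem {k M N : Type*} [Field k] [AddCommGroup M] [Module k M]
    [AddCommGroup N] [Module k N] {x z : M} (hx : x ∉ Submodule.span k {z}) (u : N) :
    ∃ φ : M →ₗ[k] N, φ x = u ∧ φ z = 0 := by
  set p := Submodule.span k ({z} : Set M) with hp
  have hπ : p.mkQ x ≠ 0 := by
    simpa [Submodule.Quotient.mk_eq_zero] using hx
  obtain ⟨q, hq⟩ := Submodule.exists_isCompl (Submodule.span k {p.mkQ x})
  set e := LinearEquiv.toSpanNonzeroSingleton k (M ⧸ p) (p.mkQ x) hπ with he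
  set f : (M ⧸ p) →ₗ[k] k :=
    e.symm.toLinearMap ∘ₗ Submodule.linearProjOfIsCompl _ q hq with hf
  refine ⟨LinearMap.smulRight (f ∘ₗ p.mkQ) u, ?_, ?_⟩
  · have h1 : Submodule.linearProjOfIsCompl _ q hq (p.mkQ x)
        = ⟨p.mkQ x, Submodule.mem_span_singleton_self _⟩ :=
      Submodule.linearProjOfIsCompl_apply_left hq
        ⟨p.mkQ x, Submodule.mem_span_singleton_self _⟩
    have h2 : e.symm ⟨p.mkQ x, Submodule.mem_span_singleton_self _⟩ = 1 := by
      rw [LinearEquiv.symm_apply_eq, LinearEquiv.toSpanNonzeroSingleton_one]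
    simp only [LinearMap.smulRight_apply, LinearMap.comp_apply, hf,
      LinearEquiv.coe_coe, h1, h2, one_smul]
  · have h1 : p.mkQ z = 0 := by
      simp [Submodule.Quotient.mk_eq_zero, hp, Submodule.mem_span_singleton_self]
    simp [LinearMap.smulRight_apply, LinearMap.comp_apply, h1]

end Helpers

theorem sub_helper {G : Type*} [AddCommGroup G] {a b c d : G} (h : a - b + c - d = 0) :
    b = a + c - d := by
  have h3 : b - (a + c - d) = -(a - b + c - d) := by abel
  exact sub_eq_zero.mp (by rw [h3, h, neg_zero])
section Unip

variable {k A B C : Type*} [CommRing k] [AddCommGroup A] [Module k A]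
  [AddCommGroup B] [Module k B] [AddCommGroup C] [Module k C]

/-- The unipotent automorphism `id + n` for a square-zero endomorphism `n`. -/
def unip (n : A →ₗ[k] A) (hn : ∀ a, n (n a) = 0) : A ≃ₗ[k] A :=
  LinearEquiv.ofLinear (LinearMap.id + n) (LinearMap.id - n)
    (by
      ext a
      simp only [LinearMap.comp_apply, LinearMap.add_apply, LinearMap.sub_apply,
        LinearMap.id_apply, map_sub, hn, sub_zero, LinearMap.id_coe, id_eq]
      abel)
    (by
      ext a
      simp only [LinearMap.comp_apply, LinearMap.add_apply, LinearMap.sub_apply,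
        LinearMap.id_apply, map_add, hn, add_zero, LinearMap.id_coe, id_eq]
      abel)

theorem unip_apply (n : A →ₗ[k] A) (hn : ∀ a, n (n a) = 0) (a : A) :
    unip n hn a = a + n a := by
  simp [unip, LinearEquiv.ofLinear_apply]

/-- Correction map: factor a map with values in the range of an injection. -/
noncomputable def corr (i : C →ₗ[k] A) (hi : Function.Injective i) (δ : B →ₗ[k] A)
    (hδ : ∀ b, δ b ∈ LinearMap.range i) : B →ₗ[k] C :=
  (LinearEquiv.ofInjective i hi).symm.toLinearMap ∘ₗ δ.codRestrict _ hδ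

theorem corr_spec (i : C →ₗ[k] A) (hi : Function.Injective i) (δ : B →ₗ[k] A)
    (hδ : ∀ b, δ b ∈ LinearMap.range i) (b : B) : i (corr i hi δ hδ b) = δ b := by
  have h := LinearEquiv.ofInjective_symm_apply (f := i) (h := hi)
    ((δ.codRestrict _ hδ) b)
  simpa [corr] using h

end Unip
section ToData
variable {k : Type*} [CommRing k] {g h V W : Type*}
  [AddCommGroup g] [Module k g] [AddCommGroup h] [Module k h]
  [AddCommGroup V] [Module k V] [AddCommGroup W] [Module k W]
  {M : MatchedPair k g h} (R : MPRep (V := V) (W := W) M)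
theorem MPRep.toData_ρV : (MPRep.toData R).ρV = R.rV.ρ := rfl
theorem MPRep.toData_ψV : (MPRep.toData R).ψV = R.pV.ρ := rfl
theorem MPRep.toData_ρW : (MPRep.toData R).ρW = R.rW.ρ := rfl
theorem MPRep.toData_ψW : (MPRep.toData R).ψW = R.pW.ρ := rfl
theorem MPRep.toData_A : (MPRep.toData R).A = R.A := rfl
theorem MPRep.toData_B : (MPRep.toData R).B = R.B := rfl

end ToData
section MainAux

variable {k : Type*} [Field k] {g h V W ghat hhat : Type*}
    [AddCommGroup g] [Module k g] [AddCommGroup h] [Module k h]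
    [AddCommGroup V] [Module k V] [AddCommGroup W] [Module k W]
    [AddCommGroup ghat] [Module k ghat] [AddCommGroup hhat] [Module k hhat]
    {M : MatchedPair k g h} (E : AbelianExt k g h V W ghat hhat M)

theorem AE.j1_i1 (v : V) : E.j1 (E.i1 v) = 0 := (E.exact1 _).2 ⟨v, rfl⟩
theorem AE.j2_i2 (w : W) : E.j2 (E.i2 w) = 0 := (E.exact2 _).2 ⟨w, rfl⟩

variable (s1 : g →ₗ[k] ghat) (s2 : h →ₗ[k] hhat) (hs : IsSection E s1 s2)
include hs

theorem AE.decomp1 (X : ghat) : ∃ x p, X = s1 x + E.i1 p := by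
  obtain ⟨v, hv⟩ := (E.exact1 (X - s1 (E.j1 X))).1 (by simp [map_sub, hs.1])
  exact ⟨E.j1 X, v, by rw [hv]; abel⟩

theorem AE.decomp2 (A : hhat) : ∃ a m, A = s2 a + E.i2 m := by
  obtain ⟨w, hw⟩ := (E.exact2 (A - s2 (E.j2 A))).1 (by simp [map_sub, hs.2])
  exact ⟨E.j2 A, w, by rw [hw]; abel⟩

theorem AE.sec_var1 (φ : g →ₗ[k] V) : IsSection E (s1 + E.i1 ∘ₗ φ) s2 :=
  ⟨fun x => by simp [hs.1, AE.j1_i1], hs.2⟩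

theorem AE.sec_var2 (φ : h →ₗ[k] W) : IsSection E s1 (s2 + E.i2 ∘ₗ φ) :=
  ⟨hs.1, fun a => by simp [hs.2, AE.j2_i2]⟩

variable (R : MPRep (V := V) (W := W) M) (hR : IsInducedRep E R.toData)
include hR

theorem AE.hR1 : ∀ x1 x2 v, E.i1 (R.rV.ρ x1 x2 v) = E.Mhat.Lg.br (s1 x1) (s1 x2) (E.i1 v) :=
  (hR s1 s2 hs).1
theorem AE.hR2 : ∀ x1 x2 w, E.i2 (R.rW.ρ x1 x2 w) = E.Mhat.ρ.ρ (s1 x1) (s1 x2) (E.i2 w) :=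
  (hR s1 s2 hs).2.1
theorem AE.hR3 : ∀ a1 a2 v, E.i1 (R.pV.ρ a1 a2 v) = E.Mhat.ψ.ρ (s2 a1) (s2 a2) (E.i1 v) :=
  (hR s1 s2 hs).2.2.1
theorem AE.hR4 : ∀ a1 a2 w, E.i2 (R.pW.ρ a1 a2 w) = E.Mhat.Lh.br (s2 a1) (s2 a2) (E.i2 w) :=
  (hR s1 s2 hs).2.2.2.1
theorem AE.hR5 : ∀ v x a, E.i2 (R.A v x a) = E.Mhat.ρ.ρ (E.i1 v) (s1 x) (s2 a) :=
  (hR s1 s2 hs).2.2.2.2.1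
theorem AE.hR6 : ∀ w a x, E.i1 (R.B w a x) = E.Mhat.ψ.ρ (E.i2 w) (s2 a) (s1 x) :=
  (hR s1 s2 hs).2.2.2.2.2

theorem AE.STARg (φ : g →ₗ[k] V) (t1 t2 : g) (v : V) :
    E.Mhat.Lg.br (E.i1 (φ t1)) (E.i1 v) (s1 t2)
      = E.Mhat.Lg.br (E.i1 (φ t2)) (E.i1 v) (s1 t1) := by
  have h0 := AE.hR1 E s1 s2 hs R hR t1 t2 v
  have key : E.Mhat.Lg.br (s1 t1 + E.i1 (φ t1)) (s1 t2 + E.i1 (φ t2)) (E.i1 v)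
      = E.Mhat.Lg.br (s1 t1) (s1 t2) (E.i1 v)
        + (E.Mhat.Lg.br (E.i1 (φ t1)) (s1 t2) (E.i1 v)
           + E.Mhat.Lg.br (s1 t1) (E.i1 (φ t2)) (E.i1 v)) := by
    simp only [map_add, LinearMap.add_apply, E.i1_br]
    abel
  have h1 := (hR _ _ (AE.sec_var1 E s1 s2 hs φ)).1 t1 t2 v
  simp only [LinearMap.add_apply, LinearMap.comp_apply] at h1
  rw [key, ← h0] at h1
  have h2 := left_eq_add.mp h1
  have e1 : E.Mhat.Lg.br (E.i1 (φ t1)) (s1 t2) (E.i1 v)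
      = - E.Mhat.Lg.br (s1 t1) (E.i1 (φ t2)) (E.i1 v) := eq_neg_of_add_eq_zero_left h2
  have e2 := E.Mhat.Lg.swap23 (E.i1 (φ t1)) (E.i1 v) (s1 t2)
  have e3 : E.Mhat.Lg.br (s1 t1) (E.i1 (φ t2)) (E.i1 v)
      = E.Mhat.Lg.br (E.i1 (φ t2)) (E.i1 v) (s1 t1) := E.Mhat.Lg.cyc _ _ _
  rw [e2, e1, neg_neg, e3]

theorem AE.STARh (φ : h →ₗ[k] W) (t1 t2 : h) (w : W) :
    E.Mhat.Lh.br (E.i2 (φ t1)) (E.i2 w) (s2 t2)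
      = E.Mhat.Lh.br (E.i2 (φ t2)) (E.i2 w) (s2 t1) := by
  have h0 := AE.hR4 E s1 s2 hs R hR t1 t2 w
  have key : E.Mhat.Lh.br (s2 t1 + E.i2 (φ t1)) (s2 t2 + E.i2 (φ t2)) (E.i2 w)
      = E.Mhat.Lh.br (s2 t1) (s2 t2) (E.i2 w)
        + (E.Mhat.Lh.br (E.i2 (φ t1)) (s2 t2) (E.i2 w)
           + E.Mhat.Lh.br (s2 t1) (E.i2 (φ t2)) (E.i2 w)) := by
    simp only [map_add, LinearMap.add_apply, E.i2_br]
    abel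
  have h1 := (hR _ _ (AE.sec_var2 E s1 s2 hs φ)).2.2.2.1 t1 t2 w
  simp only [LinearMap.add_apply, LinearMap.comp_apply] at h1
  rw [key, ← h0] at h1
  have h2 := left_eq_add.mp h1
  have e1 : E.Mhat.Lh.br (E.i2 (φ t1)) (s2 t2) (E.i2 w)
      = - E.Mhat.Lh.br (s2 t1) (E.i2 (φ t2)) (E.i2 w) := eq_neg_of_add_eq_zero_left h2
  have e2 := E.Mhat.Lh.swap23 (E.i2 (φ t1)) (E.i2 w) (s2 t2)
  have e3 : E.Mhat.Lh.br (s2 t1) (E.i2 (φ t2)) (E.i2 w)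
      = E.Mhat.Lh.br (E.i2 (φ t2)) (E.i2 w) (s2 t1) := E.Mhat.Lh.cyc _ _ _
  rw [e2, e1, neg_neg, e3]

theorem AE.Rvar1 (φ : g →ₗ[k] V) (v : V) (t : g) (a : h) :
    E.Mhat.ρ.ρ (E.i1 v) (E.i1 (φ t)) (s2 a) = 0 := by
  have h0 := AE.hR5 E s1 s2 hs R hR v t a
  have h1 := (hR _ _ (AE.sec_var1 E s1 s2 hs φ)).2.2.2.2.1 v t a
  simp only [LinearMap.add_apply, LinearMap.comp_apply, map_add] at h1
  rw [← h0] at h1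
  exact left_eq_add.mp h1

theorem AE.Rvar2 (φ : h →ₗ[k] W) (v : V) (x : g) (c : h) :
    E.Mhat.ρ.ρ (E.i1 v) (s1 x) (E.i2 (φ c)) = 0 := by
  have h0 := AE.hR5 E s1 s2 hs R hR v x c
  have h1 := (hR _ _ (AE.sec_var2 E s1 s2 hs φ)).2.2.2.2.1 v x c
  simp only [LinearMap.add_apply, LinearMap.comp_apply, map_add] at h1
  rw [← h0] at h1
  exact left_eq_add.mp h1

theorem AE.Rstar (φ : g →ₗ[k] V) (t1 t2 : g) (w : W) :
    E.Mhat.ρ.ρ (E.i1 (φ t1)) (s1 t2) (E.i2 w)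
      = E.Mhat.ρ.ρ (E.i1 (φ t2)) (s1 t1) (E.i2 w) := by
  have h0 := AE.hR2 E s1 s2 hs R hR t1 t2 w
  have key : E.Mhat.ρ.ρ (s1 t1 + E.i1 (φ t1)) (s1 t2 + E.i1 (φ t2)) (E.i2 w)
      = E.Mhat.ρ.ρ (s1 t1) (s1 t2) (E.i2 w)
        + (E.Mhat.ρ.ρ (E.i1 (φ t1)) (s1 t2) (E.i2 w)
           + E.Mhat.ρ.ρ (s1 t1) (E.i1 (φ t2)) (E.i2 w)) := by
    simp only [map_add, LinearMap.add_apply, E.i_rho]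
    abel
  have h1 := (hR _ _ (AE.sec_var1 E s1 s2 hs φ)).2.1 t1 t2 w
  simp only [LinearMap.add_apply, LinearMap.comp_apply] at h1
  rw [key, ← h0] at h1
  have h2 := left_eq_add.mp h1
  have e1 := eq_neg_of_add_eq_zero_left h2
  rw [e1, Rep3.swap E.Mhat.ρ (s1 t1) (E.i1 (φ t2)) (E.i2 w), neg_neg]

theorem AE.Pvar1 (φ : h →ₗ[k] W) (w : W) (c : h) (x : g) :
    E.Mhat.ψ.ρ (E.i2 w) (E.i2 (φ c)) (s1 x) = 0 := by
  have h0 := AE.hR6 E s1 s2 hs R hR w c x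
  have h1 := (hR _ _ (AE.sec_var2 E s1 s2 hs φ)).2.2.2.2.2 w c x
  simp only [LinearMap.add_apply, LinearMap.comp_apply, map_add] at h1
  rw [← h0] at h1
  exact left_eq_add.mp h1

theorem AE.Pvar2 (φ : g →ₗ[k] V) (w : W) (a : h) (t : g) :
    E.Mhat.ψ.ρ (E.i2 w) (s2 a) (E.i1 (φ t)) = 0 := by
  have h0 := AE.hR6 E s1 s2 hs R hR w a t
  have h1 := (hR _ _ (AE.sec_var1 E s1 s2 hs φ)).2.2.2.2.2 w a t
  simp only [LinearMap.add_apply, LinearMap.comp_apply, map_add] at h1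
  rw [← h0] at h1
  exact left_eq_add.mp h1

theorem AE.Pstar (φ : h →ₗ[k] W) (c1 c2 : h) (v : V) :
    E.Mhat.ψ.ρ (E.i2 (φ c1)) (s2 c2) (E.i1 v)
      = E.Mhat.ψ.ρ (E.i2 (φ c2)) (s2 c1) (E.i1 v) := by
  have h0 := AE.hR3 E s1 s2 hs R hR c1 c2 v
  have key : E.Mhat.ψ.ρ (s2 c1 + E.i2 (φ c1)) (s2 c2 + E.i2 (φ c2)) (E.i1 v)
      = E.Mhat.ψ.ρ (s2 c1) (s2 c2) (E.i1 v)
        + (E.Mhat.ψ.ρ (E.i2 (φ c1)) (s2 c2) (E.i1 v)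
           + E.Mhat.ψ.ρ (s2 c1) (E.i2 (φ c2)) (E.i1 v)) := by
    simp only [map_add, LinearMap.add_apply, E.i_psi]
    abel
  have h1 := (hR _ _ (AE.sec_var2 E s1 s2 hs φ)).2.2.1 c1 c2 v
  simp only [LinearMap.add_apply, LinearMap.comp_apply] at h1
  rw [key, ← h0] at h1
  have h2 := left_eq_add.mp h1
  have e1 := eq_neg_of_add_eq_zero_left h2
  rw [e1, Rep3.swap E.Mhat.ψ (s2 c1) (E.i2 (φ c2)) (E.i1 v), neg_neg]

theorem AE.HLg (ζ : g →ₗ[k] V) (x y z : g) :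
    E.Mhat.Lg.br (E.i1 (ζ x)) (E.i1 (ζ y)) (s1 z) = 0 := by
  by_cases hx : x ∈ Submodule.span k ({z} : Set g)
  · by_cases hy : y ∈ Submodule.span k ({z} : Set g)
    · obtain ⟨a, ha⟩ := Submodule.mem_span_singleton.1 hx
      obtain ⟨b, hb⟩ := Submodule.mem_span_singleton.1 hy
      rw [← ha, ← hb]
      simp only [map_smul, LinearMap.smul_apply, E.Mhat.Lg.alt₁, smul_zero]
    · obtain ⟨φ, hφy, hφz⟩ := exists_linmap_of_not_mem hy (ζ y)
      have h3 := AE.STARg E s1 s2 hs R hR φ y z (ζ x)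
      rw [hφy, hφz] at h3
      simp only [map_zero, LinearMap.zero_apply] at h3
      rw [E.Mhat.Lg.swap12, h3, neg_zero]
  · obtain ⟨φ, hφx, hφz⟩ := exists_linmap_of_not_mem hx (ζ x)
    have h3 := AE.STARg E s1 s2 hs R hR φ x z (ζ y)
    rw [hφx, hφz] at h3
    simp only [map_zero, LinearMap.zero_apply] at h3
    exact h3

theorem AE.HLh (η : h →ₗ[k] W) (a b c : h) :
    E.Mhat.Lh.br (E.i2 (η a)) (E.i2 (η b)) (s2 c) = 0 := by
  by_cases hx : a ∈ Submodule.span k ({c} : Set h)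
  · by_cases hy : b ∈ Submodule.span k ({c} : Set h)
    · obtain ⟨u, hu⟩ := Submodule.mem_span_singleton.1 hx
      obtain ⟨v, hv⟩ := Submodule.mem_span_singleton.1 hy
      rw [← hu, ← hv]
      simp only [map_smul, LinearMap.smul_apply, E.Mhat.Lh.alt₁, smul_zero]
    · obtain ⟨φ, hφy, hφz⟩ := exists_linmap_of_not_mem hy (η b)
      have h3 := AE.STARh E s1 s2 hs R hR φ b c (η a)
      rw [hφy, hφz] at h3
      simp only [map_zero, LinearMap.zero_apply] at h3
      rw [E.Mhat.Lh.swap12, h3, neg_zero]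
  · obtain ⟨φ, hφx, hφz⟩ := exists_linmap_of_not_mem hx (η a)
    have h3 := AE.STARh E s1 s2 hs R hR φ a c (η b)
    rw [hφx, hφz] at h3
    simp only [map_zero, LinearMap.zero_apply] at h3
    exact h3

theorem AE.MEg (ζ : g →ₗ[k] V) (x y z : g) (p q r : V) :
    E.Mhat.Lg.br (s1 x + E.i1 p + E.i1 (ζ x)) (s1 y + E.i1 q + E.i1 (ζ y))
        (s1 z + E.i1 r + E.i1 (ζ z))
      = E.Mhat.Lg.br (s1 x + E.i1 p) (s1 y + E.i1 q) (s1 z + E.i1 r)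
        + E.i1 (R.rV.ρ y z (ζ x)) + E.i1 (R.rV.ρ z x (ζ y)) + E.i1 (R.rV.ρ x y (ζ z)) := by
  have c1 : E.Mhat.Lg.br (E.i1 (ζ x)) (s1 y) (s1 z) = E.i1 (R.rV.ρ y z (ζ x)) := by
    rw [E.Mhat.Lg.cyc (E.i1 (ζ x)) (s1 y) (s1 z)]
    exact (AE.hR1 E s1 s2 hs R hR y z (ζ x)).symm
  have c2 : E.Mhat.Lg.br (s1 x) (E.i1 (ζ y)) (s1 z) = E.i1 (R.rV.ρ z x (ζ y)) := by
    rw [E.Mhat.Lg.cyc (s1 x) (E.i1 (ζ y)) (s1 z),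
      E.Mhat.Lg.cyc (E.i1 (ζ y)) (s1 z) (s1 x)]
    exact (AE.hR1 E s1 s2 hs R hR z x (ζ y)).symm
  have c3 : E.Mhat.Lg.br (s1 x) (s1 y) (E.i1 (ζ z)) = E.i1 (R.rV.ρ x y (ζ z)) :=
    (AE.hR1 E s1 s2 hs R hR x y (ζ z)).symm
  have t1 : E.Mhat.Lg.br (E.i1 (ζ x)) (E.i1 q) (s1 z)
      = - E.Mhat.Lg.br (s1 x) (E.i1 q) (E.i1 (ζ z)) := by
    rw [AE.STARg E s1 s2 hs R hR ζ x z q,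
      E.Mhat.Lg.cyc (s1 x) (E.i1 q) (E.i1 (ζ z)),
      E.Mhat.Lg.swap12 (E.i1 q) (E.i1 (ζ z)) (s1 x), neg_neg]
  have t2 : E.Mhat.Lg.br (E.i1 p) (E.i1 (ζ y)) (s1 z)
      = - E.Mhat.Lg.br (E.i1 p) (s1 y) (E.i1 (ζ z)) := by
    rw [E.Mhat.Lg.swap12 (E.i1 p) (E.i1 (ζ y)) (s1 z),
      AE.STARg E s1 s2 hs R hR ζ y z p,
      E.Mhat.Lg.swap23 (E.i1 p) (s1 y) (E.i1 (ζ z)),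
      E.Mhat.Lg.swap12 (E.i1 p) (E.i1 (ζ z)) (s1 y)]
    simp only [neg_neg]
  have t3 : E.Mhat.Lg.br (E.i1 (ζ x)) (s1 y) (E.i1 r)
      = - E.Mhat.Lg.br (s1 x) (E.i1 (ζ y)) (E.i1 r) := by
    rw [E.Mhat.Lg.swap23 (E.i1 (ζ x)) (s1 y) (E.i1 r),
      AE.STARg E s1 s2 hs R hR ζ x y r,
      E.Mhat.Lg.cyc (s1 x) (E.i1 (ζ y)) (E.i1 r)]
  have z1 : E.Mhat.Lg.br (E.i1 (ζ x)) (E.i1 (ζ y)) (s1 z) = 0 :=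
    AE.HLg E s1 s2 hs R hR ζ x y z
  have z2 : E.Mhat.Lg.br (E.i1 (ζ x)) (s1 y) (E.i1 (ζ z)) = 0 := by
    rw [E.Mhat.Lg.swap23 (E.i1 (ζ x)) (s1 y) (E.i1 (ζ z)),
      AE.HLg E s1 s2 hs R hR ζ x z y, neg_zero]
  have z3 : E.Mhat.Lg.br (s1 x) (E.i1 (ζ y)) (E.i1 (ζ z)) = 0 := by
    rw [E.Mhat.Lg.cyc (s1 x) (E.i1 (ζ y)) (E.i1 (ζ z)),
      AE.HLg E s1 s2 hs R hR ζ y z x]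
  simp only [map_add, LinearMap.add_apply, c1, c2, c3, t1, t2, t3, z1, z2, z3, E.i1_br,
    add_zero, zero_add]
  abel

theorem AE.MEh (η : h →ₗ[k] W) (a b c : h) (m n o : W) :
    E.Mhat.Lh.br (s2 a + E.i2 m + E.i2 (η a)) (s2 b + E.i2 n + E.i2 (η b))
        (s2 c + E.i2 o + E.i2 (η c))
      = E.Mhat.Lh.br (s2 a + E.i2 m) (s2 b + E.i2 n) (s2 c + E.i2 o)
        + E.i2 (R.pW.ρ b c (η a)) + E.i2 (R.pW.ρ c a (η b)) + E.i2 (R.pW.ρ a b (η c)) := by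
  have c1 : E.Mhat.Lh.br (E.i2 (η a)) (s2 b) (s2 c) = E.i2 (R.pW.ρ b c (η a)) := by
    rw [E.Mhat.Lh.cyc (E.i2 (η a)) (s2 b) (s2 c)]
    exact (AE.hR4 E s1 s2 hs R hR b c (η a)).symm
  have c2 : E.Mhat.Lh.br (s2 a) (E.i2 (η b)) (s2 c) = E.i2 (R.pW.ρ c a (η b)) := by
    rw [E.Mhat.Lh.cyc (s2 a) (E.i2 (η b)) (s2 c),
      E.Mhat.Lh.cyc (E.i2 (η b)) (s2 c) (s2 a)]
    exact (AE.hR4 E s1 s2 hs R hR c a (η b)).symm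
  have c3 : E.Mhat.Lh.br (s2 a) (s2 b) (E.i2 (η c)) = E.i2 (R.pW.ρ a b (η c)) :=
    (AE.hR4 E s1 s2 hs R hR a b (η c)).symm
  have t1 : E.Mhat.Lh.br (E.i2 (η a)) (E.i2 n) (s2 c)
      = - E.Mhat.Lh.br (s2 a) (E.i2 n) (E.i2 (η c)) := by
    rw [AE.STARh E s1 s2 hs R hR η a c n,
      E.Mhat.Lh.cyc (s2 a) (E.i2 n) (E.i2 (η c)),
      E.Mhat.Lh.swap12 (E.i2 n) (E.i2 (η c)) (s2 a), neg_neg]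
  have t2 : E.Mhat.Lh.br (E.i2 m) (E.i2 (η b)) (s2 c)
      = - E.Mhat.Lh.br (E.i2 m) (s2 b) (E.i2 (η c)) := by
    rw [E.Mhat.Lh.swap12 (E.i2 m) (E.i2 (η b)) (s2 c),
      AE.STARh E s1 s2 hs R hR η b c m,
      E.Mhat.Lh.swap23 (E.i2 m) (s2 b) (E.i2 (η c)),
      E.Mhat.Lh.swap12 (E.i2 m) (E.i2 (η c)) (s2 b)]
    simp only [neg_neg]
  have t3 : E.Mhat.Lh.br (E.i2 (η a)) (s2 b) (E.i2 o)
      = - E.Mhat.Lh.br (s2 a) (E.i2 (η b)) (E.i2 o) := by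
    rw [E.Mhat.Lh.swap23 (E.i2 (η a)) (s2 b) (E.i2 o),
      AE.STARh E s1 s2 hs R hR η a b o,
      E.Mhat.Lh.cyc (s2 a) (E.i2 (η b)) (E.i2 o)]
  have z1 : E.Mhat.Lh.br (E.i2 (η a)) (E.i2 (η b)) (s2 c) = 0 :=
    AE.HLh E s1 s2 hs R hR η a b c
  have z2 : E.Mhat.Lh.br (E.i2 (η a)) (s2 b) (E.i2 (η c)) = 0 := by
    rw [E.Mhat.Lh.swap23 (E.i2 (η a)) (s2 b) (E.i2 (η c)),
      AE.HLh E s1 s2 hs R hR η a c b, neg_zero]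
  have z3 : E.Mhat.Lh.br (s2 a) (E.i2 (η b)) (E.i2 (η c)) = 0 := by
    rw [E.Mhat.Lh.cyc (s2 a) (E.i2 (η b)) (E.i2 (η c)),
      AE.HLh E s1 s2 hs R hR η b c a]
  simp only [map_add, LinearMap.add_apply, c1, c2, c3, t1, t2, t3, z1, z2, z3, E.i2_br,
    add_zero, zero_add]
  abel

theorem AE.MErho (ζ : g →ₗ[k] V) (η : h →ₗ[k] W) (x y : g) (a : h) (p q : V) (m : W) :
    E.Mhat.ρ.ρ (s1 x + E.i1 p + E.i1 (ζ x)) (s1 y + E.i1 q + E.i1 (ζ y))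
        (s2 a + E.i2 m + E.i2 (η a))
      = E.Mhat.ρ.ρ (s1 x + E.i1 p) (s1 y + E.i1 q) (s2 a + E.i2 m)
        + E.i2 (R.rW.ρ x y (η a)) + E.i2 (R.A (ζ x) y a) - E.i2 (R.A (ζ y) x a) := by
  have c1 : E.Mhat.ρ.ρ (E.i1 (ζ x)) (s1 y) (s2 a) = E.i2 (R.A (ζ x) y a) :=
    (AE.hR5 E s1 s2 hs R hR (ζ x) y a).symm
  have c2 : E.Mhat.ρ.ρ (s1 x) (E.i1 (ζ y)) (s2 a) = -(E.i2 (R.A (ζ y) x a)) := by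
    rw [Rep3.swap E.Mhat.ρ (s1 x) (E.i1 (ζ y)) (s2 a),
      ← AE.hR5 E s1 s2 hs R hR (ζ y) x a]
  have c3 : E.Mhat.ρ.ρ (s1 x) (s1 y) (E.i2 (η a)) = E.i2 (R.rW.ρ x y (η a)) :=
    (AE.hR2 E s1 s2 hs R hR x y (η a)).symm
  have z1 : E.Mhat.ρ.ρ (E.i1 (ζ x)) (E.i1 q) (s2 a) = 0 := by
    rw [Rep3.swap E.Mhat.ρ (E.i1 (ζ x)) (E.i1 q) (s2 a),
      AE.Rvar1 E s1 s2 hs R hR ζ q x a, neg_zero]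
  have z2 : E.Mhat.ρ.ρ (E.i1 p) (E.i1 (ζ y)) (s2 a) = 0 :=
    AE.Rvar1 E s1 s2 hs R hR ζ p y a
  have z3 : E.Mhat.ρ.ρ (E.i1 (ζ x)) (E.i1 (ζ y)) (s2 a) = 0 :=
    AE.Rvar1 E s1 s2 hs R hR ζ (ζ x) y a
  have t1 : E.Mhat.ρ.ρ (E.i1 (ζ x)) (s1 y) (E.i2 m)
      = - E.Mhat.ρ.ρ (s1 x) (E.i1 (ζ y)) (E.i2 m) := by
    rw [AE.Rstar E s1 s2 hs R hR ζ x y m,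
      Rep3.swap E.Mhat.ρ (s1 x) (E.i1 (ζ y)) (E.i2 m)]
    simp only [neg_neg]
  have z4 : E.Mhat.ρ.ρ (E.i1 p) (s1 y) (E.i2 (η a)) = 0 :=
    AE.Rvar2 E s1 s2 hs R hR η p y a
  have z5 : E.Mhat.ρ.ρ (E.i1 (ζ x)) (s1 y) (E.i2 (η a)) = 0 :=
    AE.Rvar2 E s1 s2 hs R hR η (ζ x) y a
  have z6 : E.Mhat.ρ.ρ (s1 x) (E.i1 q) (E.i2 (η a)) = 0 := by
    rw [Rep3.swap E.Mhat.ρ (s1 x) (E.i1 q) (E.i2 (η a)),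
      AE.Rvar2 E s1 s2 hs R hR η q x a, neg_zero]
  have z7 : E.Mhat.ρ.ρ (s1 x) (E.i1 (ζ y)) (E.i2 (η a)) = 0 := by
    rw [Rep3.swap E.Mhat.ρ (s1 x) (E.i1 (ζ y)) (E.i2 (η a)),
      AE.Rvar2 E s1 s2 hs R hR η (ζ y) x a, neg_zero]
  simp only [map_add, LinearMap.add_apply, c1, c2, c3, z1, z2, z3, t1, z4, z5, z6, z7,
    E.i_rho, add_zero, zero_add]
  abel

theorem AE.MEpsi (ζ : g →ₗ[k] V) (η : h →ₗ[k] W) (a b : h) (x : g) (m n : W) (p : V) :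
    E.Mhat.ψ.ρ (s2 a + E.i2 m + E.i2 (η a)) (s2 b + E.i2 n + E.i2 (η b))
        (s1 x + E.i1 p + E.i1 (ζ x))
      = E.Mhat.ψ.ρ (s2 a + E.i2 m) (s2 b + E.i2 n) (s1 x + E.i1 p)
        + E.i1 (R.pV.ρ a b (ζ x)) + E.i1 (R.B (η a) b x) - E.i1 (R.B (η b) a x) := by
  have c1 : E.Mhat.ψ.ρ (E.i2 (η a)) (s2 b) (s1 x) = E.i1 (R.B (η a) b x) :=
    (AE.hR6 E s1 s2 hs R hR (η a) b x).symm
  have c2 : E.Mhat.ψ.ρ (s2 a) (E.i2 (η b)) (s1 x) = -(E.i1 (R.B (η b) a x)) := by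
    rw [Rep3.swap E.Mhat.ψ (s2 a) (E.i2 (η b)) (s1 x),
      ← AE.hR6 E s1 s2 hs R hR (η b) a x]
  have c3 : E.Mhat.ψ.ρ (s2 a) (s2 b) (E.i1 (ζ x)) = E.i1 (R.pV.ρ a b (ζ x)) :=
    (AE.hR3 E s1 s2 hs R hR a b (ζ x)).symm
  have z1 : E.Mhat.ψ.ρ (E.i2 (η a)) (E.i2 n) (s1 x) = 0 := by
    rw [Rep3.swap E.Mhat.ψ (E.i2 (η a)) (E.i2 n) (s1 x),
      AE.Pvar1 E s1 s2 hs R hR η n a x, neg_zero]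
  have z2 : E.Mhat.ψ.ρ (E.i2 m) (E.i2 (η b)) (s1 x) = 0 :=
    AE.Pvar1 E s1 s2 hs R hR η m b x
  have z3 : E.Mhat.ψ.ρ (E.i2 (η a)) (E.i2 (η b)) (s1 x) = 0 :=
    AE.Pvar1 E s1 s2 hs R hR η (η a) b x
  have t1 : E.Mhat.ψ.ρ (E.i2 (η a)) (s2 b) (E.i1 p)
      = - E.Mhat.ψ.ρ (s2 a) (E.i2 (η b)) (E.i1 p) := by
    rw [AE.Pstar E s1 s2 hs R hR η a b p,
      Rep3.swap E.Mhat.ψ (s2 a) (E.i2 (η b)) (E.i1 p)]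
    simp only [neg_neg]
  have z4 : E.Mhat.ψ.ρ (E.i2 m) (s2 b) (E.i1 (ζ x)) = 0 :=
    AE.Pvar2 E s1 s2 hs R hR ζ m b x
  have z5 : E.Mhat.ψ.ρ (E.i2 (η a)) (s2 b) (E.i1 (ζ x)) = 0 :=
    AE.Pvar2 E s1 s2 hs R hR ζ (η a) b x
  have z6 : E.Mhat.ψ.ρ (s2 a) (E.i2 n) (E.i1 (ζ x)) = 0 := by
    rw [Rep3.swap E.Mhat.ψ (s2 a) (E.i2 n) (E.i1 (ζ x)),
      AE.Pvar2 E s1 s2 hs R hR ζ n a x, neg_zero]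
  have z7 : E.Mhat.ψ.ρ (s2 a) (E.i2 (η b)) (E.i1 (ζ x)) = 0 := by
    rw [Rep3.swap E.Mhat.ψ (s2 a) (E.i2 (η b)) (E.i1 (ζ x)),
      AE.Pvar2 E s1 s2 hs R hR ζ (η b) a x, neg_zero]
  simp only [map_add, LinearMap.add_apply, c1, c2, c3, z1, z2, z3, t1, z4, z5, z6, z7,
    E.i_psi, add_zero, zero_add]
  abel


omit hR in
/-- The 1-cochain `ζ` extracted from an automorphism fixing `V` and inducing the
identity on `g`. -/
noncomputable def AE.zeta (γ1 : ghat ≃ₗ[k] ghat) (hγ : ∀ x, E.j1 (γ1 (s1 x)) = x) :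
    g →ₗ[k] V :=
  corr E.i1 E.i1_inj (γ1.toLinearMap ∘ₗ s1 - s1)
    (fun x => LinearMap.mem_range.mpr ((E.exact1 _).1 (by
      simp [map_sub, LinearMap.sub_apply, LinearMap.comp_apply, hγ, hs.1])))

omit hR in
/-- The 1-cochain `η` extracted from an automorphism fixing `W`. -/
noncomputable def AE.eta (γ2 : hhat ≃ₗ[k] hhat) (hγ : ∀ a, E.j2 (γ2 (s2 a)) = a) :
    h →ₗ[k] W :=
  corr E.i2 E.i2_inj (γ2.toLinearMap ∘ₗ s2 - s2)
    (fun a => LinearMap.mem_range.mpr ((E.exact2 _).1 (by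
      simp [map_sub, LinearMap.sub_apply, LinearMap.comp_apply, hγ, hs.2])))

omit hR in
theorem AE.zeta_spec (γ1 : ghat ≃ₗ[k] ghat) (hγ : ∀ x, E.j1 (γ1 (s1 x)) = x) (x : g) :
    E.i1 (AE.zeta E s1 s2 hs γ1 hγ x) = γ1 (s1 x) - s1 x := by
  have hsp := corr_spec E.i1 E.i1_inj (γ1.toLinearMap ∘ₗ s1 - s1)
    (fun x => LinearMap.mem_range.mpr ((E.exact1 _).1 (by
      simp [map_sub, LinearMap.sub_apply, LinearMap.comp_apply, hγ, hs.1]))) x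
  simpa [AE.zeta] using hsp

omit hR in
theorem AE.eta_spec (γ2 : hhat ≃ₗ[k] hhat) (hγ : ∀ a, E.j2 (γ2 (s2 a)) = a) (a : h) :
    E.i2 (AE.eta E s1 s2 hs γ2 hγ a) = γ2 (s2 a) - s2 a := by
  have hsp := corr_spec E.i2 E.i2_inj (γ2.toLinearMap ∘ₗ s2 - s2)
    (fun a => LinearMap.mem_range.mpr ((E.exact2 _).1 (by
      simp [map_sub, LinearMap.sub_apply, LinearMap.comp_apply, hγ, hs.2]))) a
  simpa [AE.eta] using hsp

omit hR in
theorem AE.gform (γ1 : ghat ≃ₗ[k] ghat) (hγ : ∀ x, E.j1 (γ1 (s1 x)) = x)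
    (hfix : ∀ v, γ1 (E.i1 v) = E.i1 v) (X : ghat) :
    γ1 X = X + E.i1 (AE.zeta E s1 s2 hs γ1 hγ (E.j1 X)) := by
  obtain ⟨x, p, rfl⟩ := AE.decomp1 E s1 s2 hs X
  have hj : E.j1 (s1 x + E.i1 p) = x := by simp [hs.1, AE.j1_i1]
  rw [hj, map_add, hfix p, AE.zeta_spec E s1 s2 hs γ1 hγ x]
  abel

omit hR in
theorem AE.gform2 (γ2 : hhat ≃ₗ[k] hhat) (hγ : ∀ a, E.j2 (γ2 (s2 a)) = a)
    (hfix : ∀ w, γ2 (E.i2 w) = E.i2 w) (A : hhat) :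
    γ2 A = A + E.i2 (AE.eta E s1 s2 hs γ2 hγ (E.j2 A)) := by
  obtain ⟨a, m, rfl⟩ := AE.decomp2 E s1 s2 hs A
  have hj : E.j2 (s2 a + E.i2 m) = a := by simp [hs.2, AE.j2_i2]
  rw [hj, map_add, hfix m, AE.eta_spec E s1 s2 hs γ2 hγ a]
  abel

theorem AE.cocycle_of_aut (γ1 : ghat ≃ₗ[k] ghat) (γ2 : hhat ≃ₗ[k] hhat)
    (hmp : IsMPAut E.Mhat γ1 γ2)
    (hfix1 : ∀ v, γ1 (E.i1 v) = E.i1 v) (hfix2 : ∀ w, γ2 (E.i2 w) = E.i2 w)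
    (hγ1 : ∀ x, E.j1 (γ1 (s1 x)) = x) (hγ2 : ∀ a, E.j2 (γ2 (s2 a)) = a) :
    IsCocycle1 M R.toData (AE.zeta E s1 s2 hs γ1 hγ1) (AE.eta E s1 s2 hs γ2 hγ2) := by
  set ζ := AE.zeta E s1 s2 hs γ1 hγ1 with hζdef
  set η := AE.eta E s1 s2 hs γ2 hγ2 with hηdef
  have gs1 : ∀ x, γ1 (s1 x) = s1 x + E.i1 (ζ x) := by
    intro x; rw [AE.gform E s1 s2 hs γ1 hγ1 hfix1 (s1 x), hs.1]
  have gs2 : ∀ a, γ2 (s2 a) = s2 a + E.i2 (η a) := by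
    intro a; rw [AE.gform2 E s1 s2 hs γ2 hγ2 hfix2 (s2 a), hs.2]
  refine ⟨?_, ?_, ?_, ?_⟩
  · intro x y z
    have h1 := hmp.1 (s1 x) (s1 y) (s1 z)
    rw [AE.gform E s1 s2 hs γ1 hγ1 hfix1 (E.Mhat.Lg.br (s1 x) (s1 y) (s1 z))] at h1
    have hj : E.j1 (E.Mhat.Lg.br (s1 x) (s1 y) (s1 z)) = M.Lg.br x y z := by
      rw [E.j1_br, hs.1, hs.1, hs.1]
    rw [hj, gs1 x, gs1 y, gs1 z] at h1
    have hME := AE.MEg E s1 s2 hs R hR ζ x y z 0 0 0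
    simp only [map_zero, add_zero] at hME
    rw [hME] at h1
    have h4 : E.Mhat.Lg.br (s1 x) (s1 y) (s1 z) + E.i1 (ζ (M.Lg.br x y z))
        = E.Mhat.Lg.br (s1 x) (s1 y) (s1 z)
          + (E.i1 (R.rV.ρ y z (ζ x)) + E.i1 (R.rV.ρ z x (ζ y))
             + E.i1 (R.rV.ρ x y (ζ z))) := by
      rw [h1]; abel
    have h5 := add_left_cancel h4
    apply E.i1_inj
    simp only [MPRep.toData_ρV, map_add]
    rw [h5]
  · intro x y a
    have h1 := hmp.2.2.1 (s1 x) (s1 y) (s2 a)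
    rw [AE.gform2 E s1 s2 hs γ2 hγ2 hfix2 (E.Mhat.ρ.ρ (s1 x) (s1 y) (s2 a))] at h1
    have hj : E.j2 (E.Mhat.ρ.ρ (s1 x) (s1 y) (s2 a)) = M.ρ.ρ x y a := by
      rw [E.j_rho, hs.1, hs.1, hs.2]
    rw [hj, gs1 x, gs1 y, gs2 a] at h1
    have hME := AE.MErho E s1 s2 hs R hR ζ η x y a 0 0 0
    simp only [map_zero, add_zero] at hME
    rw [hME] at h1
    have h4 : E.Mhat.ρ.ρ (s1 x) (s1 y) (s2 a) + E.i2 (η (M.ρ.ρ x y a))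
        = E.Mhat.ρ.ρ (s1 x) (s1 y) (s2 a)
          + (E.i2 (R.rW.ρ x y (η a)) + E.i2 (R.A (ζ x) y a) - E.i2 (R.A (ζ y) x a)) := by
      rw [h1]; abel
    have h5 := add_left_cancel h4
    apply E.i2_inj
    simp only [MPRep.toData_ρW, MPRep.toData_A, map_add, map_sub, map_zero]
    rw [h5]
    abel
  · intro a b x
    have h1 := hmp.2.2.2 (s2 a) (s2 b) (s1 x)
    rw [AE.gform E s1 s2 hs γ1 hγ1 hfix1 (E.Mhat.ψ.ρ (s2 a) (s2 b) (s1 x))] at h1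
    have hj : E.j1 (E.Mhat.ψ.ρ (s2 a) (s2 b) (s1 x)) = M.ψ.ρ a b x := by
      rw [E.j_psi, hs.2, hs.2, hs.1]
    rw [hj, gs2 a, gs2 b, gs1 x] at h1
    have hME := AE.MEpsi E s1 s2 hs R hR ζ η a b x 0 0 0
    simp only [map_zero, add_zero] at hME
    rw [hME] at h1
    have h4 : E.Mhat.ψ.ρ (s2 a) (s2 b) (s1 x) + E.i1 (ζ (M.ψ.ρ a b x))
        = E.Mhat.ψ.ρ (s2 a) (s2 b) (s1 x)
          + (E.i1 (R.pV.ρ a b (ζ x)) + E.i1 (R.B (η a) b x) - E.i1 (R.B (η b) a x)) := by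
      rw [h1]; abel
    have h5 := add_left_cancel h4
    apply E.i1_inj
    simp only [MPRep.toData_ψV, MPRep.toData_B, map_add, map_sub, map_zero]
    rw [h5]
    abel
  · intro a b c
    have h1 := hmp.2.1 (s2 a) (s2 b) (s2 c)
    rw [AE.gform2 E s1 s2 hs γ2 hγ2 hfix2 (E.Mhat.Lh.br (s2 a) (s2 b) (s2 c))] at h1
    have hj : E.j2 (E.Mhat.Lh.br (s2 a) (s2 b) (s2 c)) = M.Lh.br a b c := by
      rw [E.j2_br, hs.2, hs.2, hs.2]
    rw [hj, gs2 a, gs2 b, gs2 c] at h1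
    have hME := AE.MEh E s1 s2 hs R hR η a b c 0 0 0
    simp only [map_zero, add_zero] at hME
    rw [hME] at h1
    have h4 : E.Mhat.Lh.br (s2 a) (s2 b) (s2 c) + E.i2 (η (M.Lh.br a b c))
        = E.Mhat.Lh.br (s2 a) (s2 b) (s2 c)
          + (E.i2 (R.pW.ρ b c (η a)) + E.i2 (R.pW.ρ c a (η b))
             + E.i2 (R.pW.ρ a b (η c))) := by
      rw [h1]; abel
    have h5 := add_left_cancel h4
    apply E.i2_inj
    simp only [MPRep.toData_ψW, map_add]
    rw [h5]

end MainAux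

/-- For an abelian extension of a matched pair of 3-Lie
algebras, the group `Z¹_MPL(g, h; V, W)` of 1-cocycles is isomorphic to the
subgroup `Aut^{g⋈h}_{V⋈W}(ĝ ⋈ ĥ)` of automorphisms `Υ` with
`Φ(Υ) = (Id, Id)`, via `Υ = (γ1, γ2) ↦ (ζ, η)` where `ζ(x) = γ1(s1 x) - s1 x`
and `η(a) = γ2(s2 a) - s2 a`. -/
theorem Z1_iso_kernel_aut
    {k : Type*} [Field k] {g h V W ghat hhat : Type*}
    [AddCommGroup g] [Module k g] [AddCommGroup h] [Module k h]
    [AddCommGroup V] [Module k V] [AddCommGroup W] [Module k W]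
    [AddCommGroup ghat] [Module k ghat] [AddCommGroup hhat] [Module k hhat]
    {M : MatchedPair k g h} (E : AbelianExt k g h V W ghat hhat M)
    (s1 : g →ₗ[k] ghat) (s2 : h →ₗ[k] hhat) (hs : IsSection E s1 s2)
    (R : MPRep (V := V) (W := W) M) (hR : IsInducedRep E R.toData) :
    ∃ Ψ : {p : (ghat ≃ₗ[k] ghat) × (hhat ≃ₗ[k] hhat) //
            IsMPAut E.Mhat p.1 p.2 ∧
            (∀ v, p.1 (E.i1 v) = E.i1 v) ∧ (∀ w, p.2 (E.i2 w) = E.i2 w) ∧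
            (∀ x, E.j1 (p.1 (s1 x)) = x) ∧ (∀ a, E.j2 (p.2 (s2 a)) = a)} →
          {q : (g →ₗ[k] V) × (h →ₗ[k] W) // IsCocycle1 M R.toData q.1 q.2},
      Function.Bijective Ψ ∧
      -- the isomorphism is given by `ζ = γ1 ∘ s1 - s1`, `η = γ2 ∘ s2 - s2`
      (∀ Y, (∀ x, E.i1 ((Ψ Y).1.1 x) = Y.1.1 (s1 x) - s1 x) ∧
            (∀ a, E.i2 ((Ψ Y).1.2 a) = Y.1.2 (s2 a) - s2 a)) ∧
      -- `Ψ` is a homomorphism of groups (composition to addition)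
      (∀ Y Y' Z, (∀ X, Z.1.1 X = Y.1.1 (Y'.1.1 X)) →
        (∀ A, Z.1.2 A = Y.1.2 (Y'.1.2 A)) →
        (Ψ Z).1.1 = (Ψ Y).1.1 + (Ψ Y').1.1 ∧
        (Ψ Z).1.2 = (Ψ Y).1.2 + (Ψ Y').1.2) := by
  classical
  refine ⟨fun Y => ⟨⟨AE.zeta E s1 s2 hs Y.1.1 Y.2.2.2.2.1,
      AE.eta E s1 s2 hs Y.1.2 Y.2.2.2.2.2⟩,
    AE.cocycle_of_aut E s1 s2 hs R hR Y.1.1 Y.1.2 Y.2.1 Y.2.2.1 Y.2.2.2.1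
      Y.2.2.2.2.1 Y.2.2.2.2.2⟩, ⟨?_, ?_⟩, ?_, ?_⟩
  · -- injectivity
    intro Y Y' hYY'
    have hz : AE.zeta E s1 s2 hs Y.1.1 Y.2.2.2.2.1
        = AE.zeta E s1 s2 hs Y'.1.1 Y'.2.2.2.2.1 := congrArg (fun q => q.1.1) hYY'
    have he : AE.eta E s1 s2 hs Y.1.2 Y.2.2.2.2.2
        = AE.eta E s1 s2 hs Y'.1.2 Y'.2.2.2.2.2 := congrArg (fun q => q.1.2) hYY'
    apply Subtype.ext
    apply Prod.ext
    · apply LinearEquiv.ext; intro X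
      rw [AE.gform E s1 s2 hs Y.1.1 Y.2.2.2.2.1 Y.2.2.1 X,
        AE.gform E s1 s2 hs Y'.1.1 Y'.2.2.2.2.1 Y'.2.2.1 X, hz]
    · apply LinearEquiv.ext; intro A
      rw [AE.gform2 E s1 s2 hs Y.1.2 Y.2.2.2.2.2 Y.2.2.2.1 A,
        AE.gform2 E s1 s2 hs Y'.1.2 Y'.2.2.2.2.2 Y'.2.2.2.1 A, he]
  · -- surjectivity
    rintro ⟨⟨ζ, η⟩, hc⟩
    have hn1 : ∀ X, (E.i1 ∘ₗ ζ ∘ₗ E.j1) ((E.i1 ∘ₗ ζ ∘ₗ E.j1) X) = 0 := by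
      intro X; simp [LinearMap.comp_apply, AE.j1_i1]
    have hn2 : ∀ A, (E.i2 ∘ₗ η ∘ₗ E.j2) ((E.i2 ∘ₗ η ∘ₗ E.j2) A) = 0 := by
      intro A; simp [LinearMap.comp_apply, AE.j2_i2]
    set γ1 : ghat ≃ₗ[k] ghat := unip _ hn1 with hγ1def
    set γ2 : hhat ≃ₗ[k] hhat := unip _ hn2 with hγ2def
    have g1app : ∀ X, γ1 X = X + E.i1 (ζ (E.j1 X)) := by
      intro X; rw [hγ1def, unip_apply]; simp [LinearMap.comp_apply]
    have g2app : ∀ A, γ2 A = A + E.i2 (η (E.j2 A)) := by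
      intro A; rw [hγ2def, unip_apply]; simp [LinearMap.comp_apply]
    have hfix1 : ∀ v, γ1 (E.i1 v) = E.i1 v := by
      intro v; rw [g1app]; simp [AE.j1_i1]
    have hfix2 : ∀ w, γ2 (E.i2 w) = E.i2 w := by
      intro w; rw [g2app]; simp [AE.j2_i2]
    have hj1 : ∀ x, E.j1 (γ1 (s1 x)) = x := by
      intro x; rw [g1app]; simp [hs.1, AE.j1_i1]
    have hj2 : ∀ a, E.j2 (γ2 (s2 a)) = a := by
      intro a; rw [g2app]; simp [hs.2, AE.j2_i2]
    have gsum1 : ∀ x p, γ1 (s1 x + E.i1 p) = s1 x + E.i1 p + E.i1 (ζ x) := by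
      intro x p; rw [g1app]
      simp [hs.1, AE.j1_i1]
    have gsum2 : ∀ a m, γ2 (s2 a + E.i2 m) = s2 a + E.i2 m + E.i2 (η a) := by
      intro a m; rw [g2app]
      simp [hs.2, AE.j2_i2]
    have hmp : IsMPAut E.Mhat γ1 γ2 := by
      refine ⟨?_, ?_, ?_, ?_⟩
      · intro X Y Z
        obtain ⟨x, p, rfl⟩ := AE.decomp1 E s1 s2 hs X
        obtain ⟨y, q, rfl⟩ := AE.decomp1 E s1 s2 hs Y
        obtain ⟨z, r, rfl⟩ := AE.decomp1 E s1 s2 hs Z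
        rw [gsum1 x p, gsum1 y q, gsum1 z r, g1app]
        have hjbr : E.j1 (E.Mhat.Lg.br (s1 x + E.i1 p) (s1 y + E.i1 q) (s1 z + E.i1 r))
            = M.Lg.br x y z := by
          rw [E.j1_br]; simp [hs.1, AE.j1_i1]
        rw [hjbr, AE.MEg E s1 s2 hs R hR ζ x y z p q r]
        have hvc := hc.1 x y z
        rw [MPRep.toData_ρV] at hvc
        rw [← hvc]
        simp only [map_add]
        abel
      · intro A B C
        obtain ⟨a, m, rfl⟩ := AE.decomp2 E s1 s2 hs A
        obtain ⟨b, n, rfl⟩ := AE.decomp2 E s1 s2 hs B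
        obtain ⟨c, o, rfl⟩ := AE.decomp2 E s1 s2 hs C
        rw [gsum2 a m, gsum2 b n, gsum2 c o, g2app]
        have hjbr : E.j2 (E.Mhat.Lh.br (s2 a + E.i2 m) (s2 b + E.i2 n) (s2 c + E.i2 o))
            = M.Lh.br a b c := by
          rw [E.j2_br]; simp [hs.2, AE.j2_i2]
        rw [hjbr, AE.MEh E s1 s2 hs R hR η a b c m n o]
        have hvc := hc.2.2.2 a b c
        rw [MPRep.toData_ψW] at hvc
        rw [← hvc]
        simp only [map_add]
        abel
      · intro X Y A
        obtain ⟨x, p, rfl⟩ := AE.decomp1 E s1 s2 hs X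
        obtain ⟨y, q, rfl⟩ := AE.decomp1 E s1 s2 hs Y
        obtain ⟨a, m, rfl⟩ := AE.decomp2 E s1 s2 hs A
        rw [gsum1 x p, gsum1 y q, gsum2 a m, g2app]
        have hjr : E.j2 (E.Mhat.ρ.ρ (s1 x + E.i1 p) (s1 y + E.i1 q) (s2 a + E.i2 m))
            = M.ρ.ρ x y a := by
          rw [E.j_rho]; simp [hs.1, hs.2, AE.j1_i1, AE.j2_i2]
        rw [hjr, AE.MErho E s1 s2 hs R hR ζ η x y a p q m]
        have hvc := hc.2.1 x y a
        dsimp only at hvc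
        have hvc' : η (M.ρ.ρ x y a)
            = R.rW.ρ x y (η a) + R.A (ζ x) y a - R.A (ζ y) x a := sub_helper hvc
        rw [hvc']
        simp only [map_add, map_sub]
        abel
      · intro A B X
        obtain ⟨a, m, rfl⟩ := AE.decomp2 E s1 s2 hs A
        obtain ⟨b, n, rfl⟩ := AE.decomp2 E s1 s2 hs B
        obtain ⟨x, p, rfl⟩ := AE.decomp1 E s1 s2 hs X
        rw [gsum2 a m, gsum2 b n, gsum1 x p, g1app]
        have hjp : E.j1 (E.Mhat.ψ.ρ (s2 a + E.i2 m) (s2 b + E.i2 n) (s1 x + E.i1 p))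
            = M.ψ.ρ a b x := by
          rw [E.j_psi]; simp [hs.1, hs.2, AE.j1_i1, AE.j2_i2]
        rw [hjp, AE.MEpsi E s1 s2 hs R hR ζ η a b x m n p]
        have hvc := hc.2.2.1 a b x
        dsimp only at hvc
        have hvc' : ζ (M.ψ.ρ a b x)
            = R.pV.ρ a b (ζ x) + R.B (η a) b x - R.B (η b) a x := sub_helper hvc
        rw [hvc']
        simp only [map_add, map_sub]
        abel
    refine ⟨⟨⟨γ1, γ2⟩, hmp, hfix1, hfix2, hj1, hj2⟩, ?_⟩
    apply Subtype.ext
    apply Prod.ext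
    · apply LinearMap.ext; intro x
      apply E.i1_inj
      show E.i1 (AE.zeta E s1 s2 hs γ1 hj1 x) = E.i1 (ζ x)
      rw [AE.zeta_spec E s1 s2 hs γ1 hj1 x, g1app (s1 x), hs.1 x]
      abel
    · apply LinearMap.ext; intro a
      apply E.i2_inj
      show E.i2 (AE.eta E s1 s2 hs γ2 hj2 a) = E.i2 (η a)
      rw [AE.eta_spec E s1 s2 hs γ2 hj2 a, g2app (s2 a), hs.2 a]
      abel
  · -- formula bullet
    intro Y
    exact ⟨fun x => AE.zeta_spec E s1 s2 hs Y.1.1 Y.2.2.2.2.1 x,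
      fun a => AE.eta_spec E s1 s2 hs Y.1.2 Y.2.2.2.2.2 a⟩
  · -- group homomorphism bullet
    intro Y Y' Z h1 h2
    constructor
    · apply LinearMap.ext; intro x
      apply E.i1_inj
      rw [LinearMap.add_apply, map_add,
        AE.zeta_spec E s1 s2 hs Z.1.1 Z.2.2.2.2.1 x,
        AE.zeta_spec E s1 s2 hs Y.1.1 Y.2.2.2.2.1 x,
        AE.zeta_spec E s1 s2 hs Y'.1.1 Y'.2.2.2.2.1 x, h1 (s1 x)]
      have e' : Y'.1.1 (s1 x) = s1 x
          + E.i1 (AE.zeta E s1 s2 hs Y'.1.1 Y'.2.2.2.2.1 x) := by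
        rw [AE.zeta_spec E s1 s2 hs Y'.1.1 Y'.2.2.2.2.1 x]; abel
      rw [e', map_add, Y.2.2.1]
      abel
    · apply LinearMap.ext; intro a
      apply E.i2_inj
      rw [LinearMap.add_apply, map_add,
        AE.eta_spec E s1 s2 hs Z.1.2 Z.2.2.2.2.2 a,
        AE.eta_spec E s1 s2 hs Y.1.2 Y.2.2.2.2.2 a,
        AE.eta_spec E s1 s2 hs Y'.1.2 Y'.2.2.2.2.2 a, h2 (s2 a)]
      have e' : Y'.1.2 (s2 a) = s2 a
          + E.i2 (AE.eta E s1 s2 hs Y'.1.2 Y'.2.2.2.2.2 a) := by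
        rw [AE.eta_spec E s1 s2 hs Y'.1.2 Y'.2.2.2.2.2 a]; abel
      rw [e', map_add, Y.2.2.2.1]
      abel
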